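/- arXiv:1611.00322 — 5 statements merged into one kernel-verified Lean document; each statement's English description precedes it below -/
import Mathlib

section
/- Maclaurin's inequality: if λ₁,…,λₙ are positive real numbers and n ≥ k ≥ l ≥ 1, then (σ_k(λ) / C(n,k))^{1/k} ≤ (σ_l(λ) / C(n,l))^{1/l}, where C(n,k) is the binomial coefficient. -/
/-!
Write `E_k = σ_k / C(n,k)`. Replacing the roots of `P = ∏ (X - λᵢ)` by the `n - 1` roots of `P'`
leaves `E_0, …, E_{n-1}` unchanged, since by Vieta the coefficients of `P'` give
`σ_j(roots of P') = (n - j) σ_j(λ) / n`. These roots are real by Rolle's theorem and stay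
nonnegative because `P' / P = ∑ 1 / (X - λᵢ)` does not vanish to the left of all `λᵢ`. Iterating
reduces the consecutive inequality `E_{k+1}^k ≤ E_k^{k+1}` to the case `n = k + 1`, where it is
AM-GM for the `k + 1` products `∏_{j ≠ i} λⱼ`; chaining the consecutive inequalities gives the
theorem.
-/

open Finset Polynomial

/-- The `k`-th elementary symmetric polynomial of `x : Fin n → ℝ`. -/
noncomputable def esymm {n : ℕ} (k : ℕ) (x : Fin n → ℝ) : ℝ :=
  ∑ s ∈ Finset.univ.powersetCard k, ∏ i ∈ s, x i

/-- `σ_{k;i}`: the `k`-th elementary symmetric polynomial with the `i`-th entry set to `0`. -/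
noncomputable def esymmAt {n : ℕ} (k : ℕ) (i : Fin n) (x : Fin n → ℝ) : ℝ :=
  esymm k (Function.update x i 0)

theorem Finset.prod_prod_erase_eq_pow {ι M : Type*} [Fintype ι] [DecidableEq ι] [CommMonoid M]
    (f : ι → M) : ∏ i, ∏ j ∈ univ.erase i, f j = (∏ i, f i) ^ (Fintype.card ι - 1) := by
  rw [Finset.prod_comm' (s' := fun j => univ.erase j) (t' := univ) (by simp [ne_comm]),
    ← Finset.prod_pow]
  refine Finset.prod_congr rfl fun j _ => ?_
  rw [Finset.prod_const, Finset.card_erase_of_mem (mem_univ j), card_univ]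

theorem Finset.sum_powersetCard_card_sub_one {ι M : Type*} [Fintype ι] [Nonempty ι]
    [DecidableEq ι] [AddCommMonoid M] (f : Finset ι → M) :
    ∑ t ∈ univ.powersetCard (Fintype.card ι - 1), f t = ∑ i, f (univ.erase i) := by
  have hcard : 0 < Fintype.card ι := Fintype.card_pos
  have hcompl : ∑ t ∈ univ.powersetCard (Fintype.card ι - 1), f t
      = ∑ u ∈ univ.powersetCard 1, f uᶜ := by
    refine Finset.sum_nbij' (fun t => tᶜ) (fun u => uᶜ) ?_ ?_ ?_ ?_ ?_ <;>
      simp +contextual [card_compl]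
    omega
  simp [hcompl, powersetCard_one, compl_eq_univ_sdiff, sdiff_singleton_eq_erase]

theorem Real.prod_le_arith_mean_pow_card {ι : Type*} (s : Finset ι) {z : ι → ℝ}
    (hz : ∀ i ∈ s, 0 ≤ z i) : ∏ i ∈ s, z i ≤ ((∑ i ∈ s, z i) / #s) ^ #s := by
  rcases s.eq_empty_or_nonempty with rfl | hs
  · simp
  have hcard : #s ≠ 0 := hs.card_pos.ne'
  have amgm := Real.geom_mean_le_arith_mean_weighted s (fun _ => (#s : ℝ)⁻¹) z
    (fun _ _ => by positivity) (by simp [hcard]) hz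
  rw [Real.finsetProd_rpow s z hz, ← Finset.mul_sum, inv_mul_eq_div] at amgm
  calc ∏ i ∈ s, z i = ((∏ i ∈ s, z i) ^ (#s : ℝ)⁻¹) ^ #s :=
        (Real.rpow_inv_natCast_pow (prod_nonneg hz) hcard).symm
    _ ≤ _ := pow_le_pow_left₀ (Real.rpow_nonneg (prod_nonneg hz) _) amgm _

theorem Real.rpow_one_div_succ_le_of_pow_le_pow_succ {a b : ℝ} {k : ℕ} (ha : 0 ≤ a)
    (hb : 0 ≤ b) (hk : k ≠ 0) (h : a ^ k ≤ b ^ (k + 1)) :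
    a ^ ((1 : ℝ) / (k + 1 : ℕ)) ≤ b ^ ((1 : ℝ) / k) := by
  refine le_of_pow_le_pow_left₀ (n := (k + 1) * k) (by positivity) (Real.rpow_nonneg hb _) ?_
  calc (a ^ ((1 : ℝ) / (k + 1 : ℕ))) ^ ((k + 1) * k) = a ^ k := by
        rw [pow_mul, one_div, Real.rpow_inv_natCast_pow ha k.succ_ne_zero]
    _ ≤ b ^ (k + 1) := h
    _ = (b ^ ((1 : ℝ) / k)) ^ ((k + 1) * k) := by
        rw [mul_comm, pow_mul, one_div, Real.rpow_inv_natCast_pow hb hk]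

namespace Polynomial

theorem Splits.derivative {p : ℝ[X]} (hp : p.Splits) : p.derivative.Splits := by
  rw [splits_iff_card_roots] at hp ⊢
  have hrolle := p.card_roots_le_derivative
  have hdeg := p.derivative.card_roots'
  rw [natDegree_derivative] at hdeg ⊢
  omega

theorem Splits.le_of_mem_roots_derivative {p : ℝ[X]} (hp : p.Splits) {c : ℝ}
    (hroots : ∀ a ∈ p.roots, c ≤ a) {z : ℝ} (hz : z ∈ p.derivative.roots) : c ≤ z := by
  by_contra! hzc
  have hp' : p.derivative ≠ 0 := ne_zero_of_mem_roots hz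
  have hp0 : p ≠ 0 := fun h => hp' (by rw [h, derivative_zero])
  have hpz : p.eval z ≠ 0 := fun h =>
    (hroots z ((mem_roots hp0).2 h)).not_gt hzc
  have hroots_ne : p.roots ≠ 0 := fun h => hp' <| derivative_of_natDegree_zero <| by
    rw [← splits_iff_card_roots.1 hp, h, Multiset.card_zero]
  have hsum : (p.roots.map fun a => 1 / (z - a)).sum < 0 := by
    simpa using Multiset.sum_lt_sum_of_nonempty (g := fun _ => (0 : ℝ)) hroots_ne
      fun a ha => one_div_neg.2 (by linarith [hroots a ha])
  have hderiv := hp.eval_derivative_eq_eval_mul_sum hpz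
  rw [(mem_roots hp').1 hz] at hderiv
  exact mul_ne_zero hpz hsum.ne (hderiv.symm)

end Polynomial

namespace Multiset

noncomputable def esymmMean (s : Multiset ℝ) (k : ℕ) : ℝ :=
  s.esymm k / (card s).choose k

noncomputable def derivativeRoots (s : Multiset ℝ) : Multiset ℝ :=
  (derivative (s.map fun a => X - C a).prod).roots

variable {s : Multiset ℝ}

theorem esymm_nonneg_of_nonneg (hs : ∀ a ∈ s, 0 ≤ a) (k : ℕ) : 0 ≤ s.esymm k :=
  sum_nonneg fun _ hx => by
    obtain ⟨t, ht, rfl⟩ := mem_map.1 hx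
    exact prod_nonneg fun a ha => hs a (mem_of_le (mem_powersetCard.1 ht).1 ha)

theorem esymmMean_nonneg (hs : ∀ a ∈ s, 0 ≤ a) (k : ℕ) : 0 ≤ s.esymmMean k :=
  div_nonneg (esymm_nonneg_of_nonneg hs k) (Nat.cast_nonneg _)

theorem esymmMean_eq_zero_of_card_lt {k : ℕ} (hk : card s < k) : s.esymmMean k = 0 := by
  simp [esymmMean, Nat.choose_eq_zero_of_lt hk]

theorem splits_prod_X_sub_C (s : Multiset ℝ) : (s.map fun a => X - C a).prod.Splits :=
  splits_iff_card_roots.2 (by simp [roots_multiset_prod_X_sub_C])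

theorem card_derivativeRoots (s : Multiset ℝ) : card s.derivativeRoots = card s - 1 := by
  rw [derivativeRoots, splits_iff_card_roots.1 (splits_prod_X_sub_C s).derivative,
    natDegree_derivative, natDegree_multiset_prod_X_sub_C_eq_card]

theorem le_of_mem_derivativeRoots {c : ℝ} (hs : ∀ a ∈ s, c ≤ a) {z : ℝ}
    (hz : z ∈ s.derivativeRoots) : c ≤ z :=
  (splits_prod_X_sub_C s).le_of_mem_roots_derivative
    (by rwa [roots_multiset_prod_X_sub_C]) hz

theorem card_mul_esymm_derivativeRoots {j : ℕ} (hj : j < card s) :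
    (card s : ℝ) * s.derivativeRoots.esymm j = (card s - j : ℕ) * s.esymm j := by
  obtain ⟨n, hn⟩ : ∃ n, card s = n + 1 := ⟨card s - 1, by omega⟩
  set p := (s.map fun a => X - C a).prod
  have hp_deg : p.natDegree = n + 1 := by rw [natDegree_multiset_prod_X_sub_C_eq_card, hn]
  have hp_lead : p.coeff (n + 1) = 1 := by
    rw [← hp_deg]
    exact (monic_multiset_prod_of_monic _ _ fun a _ => monic_X_sub_C a).coeff_natDegree
  have hq_deg : p.derivative.natDegree = n := by rw [natDegree_derivative, hp_deg]; rfl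
  have hq_lead : p.derivative.leadingCoeff = n + 1 := by
    rw [leadingCoeff, hq_deg, coeff_derivative, hp_lead]; ring
  have hq_vieta := coeff_eq_esymm_roots_of_splits (p := p.derivative)
    (splits_prod_X_sub_C s).derivative (k := n - j) (by omega)
  have hp_vieta := prod_X_sub_C_coeff s (k := n - j + 1) (by omega)
  rw [hq_deg, Nat.sub_sub_self (by omega), hq_lead, coeff_derivative] at hq_vieta
  rw [hn, show n + 1 - (n - j + 1) = j by omega] at hp_vieta
  rw [hp_vieta] at hq_vieta
  rw [hn, show n + 1 - j = n - j + 1 by omega, derivativeRoots]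
  have hsign : ((-1 : ℝ) ^ j) ≠ 0 := pow_ne_zero _ (by norm_num)
  apply mul_left_cancel₀ hsign
  push_cast
  linear_combination -hq_vieta

theorem esymmMean_derivativeRoots {j : ℕ} (hj : j < card s) :
    s.derivativeRoots.esymmMean j = s.esymmMean j := by
  have hchoose := Nat.choose_mul_succ_eq (card s - 1) j
  rw [Nat.sub_add_cancel (by omega)] at hchoose
  have hpos : (0 : ℝ) < (card s - j : ℕ) := by exact_mod_cast (by omega : 0 < card s - j)
  have hc1 : (0 : ℝ) < (card s).choose j := by exact_mod_cast Nat.choose_pos hj.le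
  have hc2 : (0 : ℝ) < (card s - 1).choose j := by exact_mod_cast Nat.choose_pos (by omega)
  have key := card_mul_esymm_derivativeRoots hj
  rw [esymmMean, esymmMean, card_derivativeRoots, div_eq_div_iff hc2.ne' hc1.ne']
  apply mul_left_cancel₀ hpos.ne'
  have hcast : ((card s - 1).choose j : ℝ) * card s = (card s).choose j * (card s - j : ℕ) := by
    exact_mod_cast hchoose
  linear_combination ((card s - 1).choose j : ℝ) * key - s.derivativeRoots.esymm j * hcast

theorem esymmMean_succ_pow_le_of_card_eq (hs : ∀ a ∈ s, 0 ≤ a) {k : ℕ} (hk : card s = k + 1) :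
    s.esymmMean (k + 1) ^ k ≤ s.esymmMean k ^ (k + 1) := by
  classical
  have hcard : Fintype.card s = k + 1 := by rw [card_coe, hk]
  have : Nonempty s := Fintype.card_pos_iff.1 (by omega)
  have hx : ∀ i : s, 0 ≤ (i : ℝ) := fun _ => hs _ coe_mem
  have hesymm (j : ℕ) : s.esymm j = ∑ t ∈ (univ : Finset s).powersetCard j, ∏ i ∈ t, (i : ℝ) := by
    rw [← Finset.esymm_map_val, map_univ_coe]
  have htop : s.esymm (k + 1) = ∏ i : s, (i : ℝ) := by
    rw [hesymm, ← hcard, ← card_univ, Finset.powersetCard_self, Finset.sum_singleton]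
  have hpred : s.esymm k = ∑ i : s, ∏ j ∈ univ.erase i, (j : ℝ) := by
    rw [hesymm, show k = Fintype.card s - 1 by omega, sum_powersetCard_card_sub_one]
  simp only [esymmMean, hk, Nat.choose_self, Nat.choose_succ_self_right, htop, hpred,
    Nat.cast_one, div_one]
  calc (∏ i : s, (i : ℝ)) ^ k = ∏ i : s, ∏ j ∈ univ.erase i, (j : ℝ) := by
        rw [prod_prod_erase_eq_pow, hcard, Nat.add_sub_cancel]
    _ ≤ ((∑ i : s, ∏ j ∈ univ.erase i, (j : ℝ)) / #univ) ^ #univ :=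
        Real.prod_le_arith_mean_pow_card _ fun _ _ => Finset.prod_nonneg fun j _ => hx j
    _ = _ := by rw [card_univ, hcard]

theorem esymmMean_succ_pow_le (hs : ∀ a ∈ s, 0 ≤ a) (k : ℕ) :
    s.esymmMean (k + 1) ^ k ≤ s.esymmMean k ^ (k + 1) := by
  rcases lt_or_ge (card s) (k + 1) with hlt | hge
  · rw [esymmMean_eq_zero_of_card_lt hlt]
    rcases k with _ | k
    · simp [esymmMean, Multiset.esymm]
    · rw [zero_pow k.succ_ne_zero]
      exact pow_nonneg (esymmMean_nonneg hs _) _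
  obtain ⟨m, hm⟩ := Nat.exists_eq_add_of_le hge
  induction m generalizing s with
  | zero => exact esymmMean_succ_pow_le_of_card_eq hs hm
  | succ m ih =>
    rw [← esymmMean_derivativeRoots (j := k + 1) (by omega),
      ← esymmMean_derivativeRoots (j := k) (by omega)]
    exact ih (fun _ => le_of_mem_derivativeRoots hs) (by rw [card_derivativeRoots]; omega)
      (by rw [card_derivativeRoots, hm]; omega)

theorem esymmMean_rpow_le (hs : ∀ a ∈ s, 0 ≤ a) {k l : ℕ} (hl : 1 ≤ l) (hlk : l ≤ k) :
    s.esymmMean k ^ ((1 : ℝ) / k) ≤ s.esymmMean l ^ ((1 : ℝ) / l) := by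
  induction k, hlk using Nat.le_induction with
  | base => exact le_rfl
  | succ k hlk ih =>
    exact (Real.rpow_one_div_succ_le_of_pow_le_pow_succ (esymmMean_nonneg hs _)
      (esymmMean_nonneg hs _) (by omega) (esymmMean_succ_pow_le hs k)).trans ih

end Multiset

theorem maclaurin_inequality_general {n : ℕ} (k l : ℕ) (hl : 1 ≤ l) (hkl : l ≤ k)
    (lam : Fin n → ℝ) (hpos : ∀ i, 0 < lam i) :
    (esymm k lam / (n.choose k : ℝ)) ^ ((1 : ℝ) / k)
      ≤ (esymm l lam / (n.choose l : ℝ)) ^ ((1 : ℝ) / l) := by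
  have hmean (j : ℕ) : esymm j lam / (n.choose j : ℝ) = (univ.val.map lam).esymmMean j := by
    rw [Multiset.esymmMean, Finset.esymm_map_val, Multiset.card_map, Finset.card_val, card_univ,
      Fintype.card_fin, esymm]
  rw [hmean, hmean]
  exact Multiset.esymmMean_rpow_le (by simpa using fun i => (hpos i).le) hl hkl

/-- Maclaurin's inequality: for positive `λ₁,…,λₙ` and `n ≥ k ≥ l ≥ 1`,
`(σ_k(λ)/C(n,k))^{1/k} ≤ (σ_l(λ)/C(n,l))^{1/l}`. -/
theorem maclaurin_inequality {n : ℕ} (k l : ℕ) (hl : 1 ≤ l) (hkl : l ≤ k) (hkn : k ≤ n)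
    (lam : Fin n → ℝ) (hpos : ∀ i, 0 < lam i) :
    (esymm k lam / (n.choose k : ℝ)) ^ ((1 : ℝ) / k)
      ≤ (esymm l lam / (n.choose l : ℝ)) ^ ((1 : ℝ) / l) :=
  maclaurin_inequality_general k l hl hkl lam hpos
end

section
/- Let n = 2m be even, let λ = (λ₁,…,λₙ) ∈ ℝⁿ, and define a_i = (1/(n-2))·(λ_i − σ₁(λ)/(2(n−1))) for each i. Suppose (a₁,…,aₙ) lies in the positive cone Γ_m⁺, i.e. σ_j(a₁,…,aₙ) > 0 for all 1 ≤ j ≤ m. Then for every index i: (n−1)·σ_m(a₁,…,aₙ) ≤ λ_i · σ_{m−1;i}(a), where σ_{m−1;i}(a) is σ_{m−1} of a with a_i set to zero. -/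
open Finset Polynomial

open Polynomial in
lemma deriv_step (s : Multiset ℝ) (N : ℕ) (hN : Multiset.card s = N) (hN1 : 1 ≤ N) :
    ∃ t : Multiset ℝ, Multiset.card t = N - 1 ∧
      ∀ j, j ≤ N - 1 → (N : ℝ) * t.esymm j = ((N : ℝ) - j) * s.esymm j := by
  classical
  set f : ℝ[X] := (s.map fun r => X - C r).prod with hf
  have hmono : f.Monic := monic_multiset_prod_of_monic _ _ (fun i _ => monic_X_sub_C i)
  have hdeg : f.natDegree = N := by
    rw [hf, natDegree_multiset_prod_X_sub_C_eq_card, hN]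
  have hroots : f.roots = s := roots_multiset_prod_X_sub_C s
  set g : ℝ[X] := derivative f with hg
  have hcoefftop : g.coeff (N - 1) = N := by
    rw [hg, coeff_derivative]
    have h1 : N - 1 + 1 = N := Nat.succ_pred_eq_of_pos hN1
    rw [h1]
    have : f.coeff N = 1 := by
      have := hmono.coeff_natDegree
      rwa [hdeg] at this
    rw [this, one_mul, Nat.cast_sub hN1]
    push_cast
    ring
  have hgne : g ≠ 0 := by
    intro h
    rw [h, coeff_zero] at hcoefftop
    have : N = 0 := by exact_mod_cast hcoefftop.symm
    omega
  have hcard_le : Multiset.card g.roots ≤ N - 1 := by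
    refine (card_roots' g).trans ?_
    have := natDegree_derivative_le f
    rw [hdeg] at this
    exact this
  have hcard_ge : N - 1 ≤ Multiset.card g.roots := by
    have := card_roots_le_derivative f
    rw [hroots, hN, ← hg] at this
    omega
  have hcard : Multiset.card g.roots = N - 1 := le_antisymm hcard_le hcard_ge
  have hdegg : g.natDegree = N - 1 := by
    have h1 : g.natDegree ≤ N - 1 := by
      have := natDegree_derivative_le f; rwa [hdeg] at this
    have h2 := card_roots' g
    omega
  have hsplit : Splits g := splits_iff_card_roots.mpr (by rw [hcard, hdegg])
  have hlead : g.leadingCoeff = N := by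
    rw [leadingCoeff, hdegg, hcoefftop]
  have hgeq : g = C (N : ℝ) * (g.roots.map fun a => X - C a).prod := by
    rw [← hlead]; exact hsplit.eq_prod_roots
  refine ⟨g.roots, hcard, fun j hj => ?_⟩
  have hj' : j ≤ N := le_trans hj (Nat.sub_le _ _)
  -- compute coeff g (N - 1 - j) two ways
  have key1 : g.coeff (N - 1 - j) = ((N:ℝ) - j) * ((-1)^j * s.esymm j) := by
    rw [hg, coeff_derivative]
    have h1 : N - 1 - j + 1 = N - j := by omega
    rw [h1]
    have h2 : N - j ≤ Multiset.card s := by rw [hN]; omega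
    have hco := Multiset.prod_X_sub_C_coeff s h2
    rw [hN] at hco
    have h3 : N - (N - j) = j := by omega
    rw [h3] at hco
    rw [show f.coeff (N-j) = (-1:ℝ)^j * s.esymm j from hco]
    have h4 : ((N - 1 - j : ℕ) : ℝ) = (N:ℝ) - j - 1 := by
      rw [Nat.cast_sub (by omega : j ≤ N - 1), Nat.cast_sub hN1]
      push_cast; ring
    rw [h4]; ring
  have key2 : g.coeff (N - 1 - j) = (N:ℝ) * ((-1)^j * (g.roots).esymm j) := by
    conv_lhs => rw [hgeq]
    rw [coeff_C_mul]
    have h2 : N - 1 - j ≤ Multiset.card g.roots := by rw [hcard]; omega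
    have := Multiset.prod_X_sub_C_coeff g.roots h2
    rw [hcard] at this
    have h3 : N - 1 - (N - 1 - j) = j := by omega
    rw [h3] at this
    rw [this]
  have heq := key1.symm.trans key2
  have hpow : ((-1:ℝ)^j) ≠ 0 := by positivity
  apply mul_left_cancel₀ hpow
  ring_nf
  ring_nf at heq
  linarith


open Finset


lemma esymm_eq_multiset {n k : ℕ} (x : Fin n → ℝ) :
    esymm k x = (Finset.univ.val.map x).esymm k := by
  rw [Finset.esymm_map_val]; rfl

lemma esymm_zero {n : ℕ} (x : Fin n → ℝ) : esymm 0 x = 1 := by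
  simp [esymm]

lemma esymm_card {n : ℕ} (x : Fin n → ℝ) : esymm n x = ∏ i, x i := by
  have h : (Finset.univ : Finset (Fin n)).card = n := by simp
  have h2 := Finset.powersetCard_self (Finset.univ : Finset (Fin n))
  rw [h] at h2
  rw [esymm, h2]
  simp

lemma esymm_gt_card {n k : ℕ} (x : Fin n → ℝ) (h : n < k) : esymm k x = 0 := by
  rw [esymm, Finset.powersetCard_eq_empty.mpr (by simpa using h), Finset.sum_empty]

lemma esymm_pred_card {M : ℕ} (x : Fin M → ℝ) (hM : 1 ≤ M) :
    esymm (M - 1) x = ∑ i, ∏ j ∈ Finset.univ.erase i, x j := by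
  rw [esymm]
  refine (Finset.sum_bij (fun i _ => Finset.univ.erase i) ?_ ?_ ?_ ?_).symm
  · intro i _
    rw [Finset.mem_powersetCard_univ, Finset.card_erase_of_mem (Finset.mem_univ i)]
    simp
  · intro i _ j _ hij
    by_contra hne
    have : i ∈ Finset.univ.erase j := Finset.mem_erase.mpr ⟨hne, Finset.mem_univ i⟩
    rw [← hij] at this
    exact (Finset.mem_erase.mp this).1 rfl
  · intro t ht
    rw [Finset.mem_powersetCard_univ] at ht
    have hc : tᶜ.card = 1 := by
      rw [Finset.card_compl, ht]
      simp; omega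
    obtain ⟨a, hat⟩ := Finset.card_eq_one.mp hc
    refine ⟨a, Finset.mem_univ a, ?_⟩
    have := congrArg compl hat
    rw [compl_compl] at this
    rw [this]
    simp [Finset.compl_singleton]
  · intro i _; rfl

lemma pair_compl_sum {M : ℕ} (x : Fin M → ℝ) (hM : 2 ≤ M) :
    ∑ p ∈ (Finset.univ : Finset (Fin M)).offDiag, ∏ j ∈ ({p.1, p.2} : Finset (Fin M))ᶜ, x j
      = 2 * esymm (M - 2) x := by
  classical
  have hmaps : ∀ p ∈ (Finset.univ : Finset (Fin M)).offDiag,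
      (({p.1, p.2} : Finset (Fin M))ᶜ) ∈ Finset.univ.powersetCard (M - 2) := by
    intro p hp
    rw [Finset.mem_offDiag] at hp
    rw [Finset.mem_powersetCard_univ, Finset.card_compl, Finset.card_pair hp.2.2]
    simp
  rw [← Finset.sum_fiberwise_of_maps_to hmaps, esymm, Finset.mul_sum]
  refine Finset.sum_congr rfl (fun t ht => ?_)
  have hsum : ∀ p ∈ (Finset.univ : Finset (Fin M)).offDiag.filter
      (fun p => ({p.1, p.2} : Finset (Fin M))ᶜ = t),
      (∏ j ∈ ({p.1, p.2} : Finset (Fin M))ᶜ, x j) = ∏ j ∈ t, x j := by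
    intro p hp
    rw [(Finset.mem_filter.mp hp).2]
  rw [Finset.sum_congr rfl hsum, Finset.sum_const]
  -- now compute the fiber cardinality
  rw [Finset.mem_powersetCard_univ] at ht
  have hc2 : tᶜ.card = 2 := by
    rw [Finset.card_compl, ht]
    simp; omega
  obtain ⟨a, b, hab, htc⟩ := Finset.card_eq_two.mp hc2
  have hfib : (Finset.univ : Finset (Fin M)).offDiag.filter
      (fun p => ({p.1, p.2} : Finset (Fin M))ᶜ = t) = {(a, b), (b, a)} := by
    ext p
    rw [Finset.mem_filter, Finset.mem_offDiag]
    constructor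
    · rintro ⟨⟨-, -, hne⟩, hq⟩
      have hpair : ({p.1, p.2} : Finset (Fin M)) = {a, b} := by
        rw [← htc, ← hq, compl_compl]
      have h1 : p.1 ∈ ({a, b} : Finset (Fin M)) := by
        rw [← hpair]; simp
      have h2 : p.2 ∈ ({a, b} : Finset (Fin M)) := by
        rw [← hpair]; simp
      simp only [Finset.mem_insert, Finset.mem_singleton] at h1 h2
      simp only [Finset.mem_insert, Finset.mem_singleton]
      rcases h1 with h1 | h1 <;> rcases h2 with h2 | h2
      · exact absurd (h1.trans h2.symm) hne
      · left; rw [← h1, ← h2]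
      · right; rw [← h1, ← h2]
      · exact absurd (h1.trans h2.symm) hne
    · intro hp
      have ht' : t = ({a, b} : Finset (Fin M))ᶜ := by
        rw [← htc, compl_compl]
      simp only [Finset.mem_insert, Finset.mem_singleton] at hp
      rcases hp with hp | hp <;> subst hp
      · exact ⟨⟨Finset.mem_univ _, Finset.mem_univ _, hab⟩, ht'.symm⟩
      · refine ⟨⟨Finset.mem_univ _, Finset.mem_univ _, hab.symm⟩, ?_⟩
        rw [Finset.pair_comm]
        exact ht'.symm
  rw [hfib]
  have hcard : ({(a, b), (b, a)} : Finset (Fin M × Fin M)).card = 2 := by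
    rw [Finset.card_insert_of_notMem, Finset.card_singleton]
    simp only [Finset.mem_singleton]
    intro h
    exact hab (congrArg Prod.fst h)
  rw [hcard]
  push_cast
  ring

lemma prod_erase_eq {M : ℕ} (x : Fin M → ℝ) {i j : Fin M} (hij : i ≠ j) :
    ∏ l ∈ Finset.univ.erase i, x l = x j * ∏ l ∈ ({i, j} : Finset (Fin M))ᶜ, x l := by
  classical
  have hset : Finset.univ.erase i = insert j (({i, j} : Finset (Fin M))ᶜ) := by
    ext k
    simp only [Finset.mem_erase, Finset.mem_univ, and_true, Finset.mem_insert,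
      Finset.mem_compl, Finset.mem_insert, Finset.mem_singleton]
    constructor
    · intro hk
      by_cases h : k = j
      · exact Or.inl h
      · exact Or.inr (by tauto)
    · rintro (rfl | hk)
      · exact fun h => hij h.symm
      · tauto
  rw [hset, Finset.prod_insert (by simp)]

lemma prod_univ_eq {M : ℕ} (x : Fin M → ℝ) {i j : Fin M} (hij : i ≠ j) :
    ∏ l, x l = x i * x j * ∏ l ∈ ({i, j} : Finset (Fin M))ᶜ, x l := by
  rw [← Finset.mul_prod_erase Finset.univ x (Finset.mem_univ i), prod_erase_eq x hij, mul_assoc]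

lemma esymm_pred_sq {M : ℕ} (x : Fin M → ℝ) (hM : 2 ≤ M) :
    (esymm (M - 1) x)^2 = (∑ i, (∏ l ∈ Finset.univ.erase i, x l)^2)
      + 2 * esymm (M - 2) x * esymm M x := by
  classical
  rw [esymm_pred_card x (by omega)]
  have expand : (∑ i, ∏ l ∈ Finset.univ.erase i, x l)^2
      = ∑ p ∈ (Finset.univ : Finset (Fin M)) ×ˢ Finset.univ,
          (∏ l ∈ Finset.univ.erase p.1, x l) * ∏ l ∈ Finset.univ.erase p.2, x l := by
    rw [sq, Finset.sum_mul_sum]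
    rw [Finset.sum_product]
  rw [expand, ← Finset.diag_union_offDiag (Finset.univ : Finset (Fin M)),
    Finset.sum_union (Finset.disjoint_diag_offDiag _), Finset.sum_diag]
  congr 1
  · exact Finset.sum_congr rfl (fun i _ => (sq _).symm)
  · have : ∀ p ∈ (Finset.univ : Finset (Fin M)).offDiag,
        (∏ l ∈ Finset.univ.erase p.1, x l) * ∏ l ∈ Finset.univ.erase p.2, x l
          = (∏ l, x l) * ∏ l ∈ ({p.1, p.2} : Finset (Fin M))ᶜ, x l := by
      intro p hp
      rw [Finset.mem_offDiag] at hp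
      rw [prod_erase_eq x hp.2.2, prod_erase_eq x (Ne.symm hp.2.2), Finset.pair_comm p.2 p.1,
        prod_univ_eq x hp.2.2]
      ring
    rw [Finset.sum_congr rfl this, ← Finset.mul_sum, pair_compl_sum x hM, esymm_card]
    ring

lemma newton_top {M : ℕ} (hM : 2 ≤ M) (x : Fin M → ℝ) :
    esymm (M - 2) x * esymm M x * (M : ℝ)^2
      ≤ (esymm (M - 1) x)^2 * (M.choose (M - 2) : ℝ) := by
  classical
  have hchoose : 2 * (M.choose (M - 2) : ℝ) = M * ((M : ℝ) - 1) := by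
    have h1 : M.choose (M - 2) = M.choose 2 := Nat.choose_symm hM
    have h2 : 2 * M.choose 2 = M * (M - 1) := by
      rw [Nat.choose_two_right]
      exact Nat.two_mul_div_two_of_even (Nat.even_mul_pred_self M)
    have h3 : ((M * (M - 1) : ℕ) : ℝ) = (M : ℝ) * ((M : ℝ) - 1) := by
      push_cast [Nat.cast_sub (by omega : 1 ≤ M)]
      ring
    rw [h1, ← h3, ← h2]
    push_cast
    ring
  have hid := esymm_pred_sq x hM
  have hcs : (esymm (M - 1) x)^2
      ≤ (M : ℝ) * ∑ i, (∏ l ∈ Finset.univ.erase i, x l)^2 := by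
    rw [esymm_pred_card x (by omega : 1 ≤ M)]
    have := sq_sum_le_card_mul_sum_sq (s := (Finset.univ : Finset (Fin M)))
      (f := fun i => ∏ l ∈ Finset.univ.erase i, x l)
    simpa using this
  have hM0 : (0:ℝ) < M := by positivity
  nlinarith [hid, hcs, mul_le_mul_of_nonneg_left hcs hM0.le]

lemma multiset_esymm_eq_zero {s : Multiset ℝ} {j : ℕ} (h : Multiset.card s < j) :
    s.esymm j = 0 := by
  rw [Multiset.esymm, Multiset.powersetCard_eq_empty j h]
  simp

lemma exists_fin_fun (s : Multiset ℝ) (M : ℕ) (h : Multiset.card s = M) :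
    ∃ x : Fin M → ℝ, Finset.univ.val.map x = s := by
  induction s using Quotient.inductionOn with
  | _ l =>
    have hl : l.length = M := by simpa using h
    subst hl
    exact ⟨l.get, by rw [Fin.univ_val_map]; exact congrArg _ (List.ofFn_get l)⟩

lemma choose_cast_id {N j : ℕ} (hj : j ≤ N) (hN : 1 ≤ N) :
    (N : ℝ) * ((N - 1).choose j : ℝ) = ((N : ℝ) - j) * (N.choose j : ℝ) := by
  have h1 : N * (N - 1).choose j = N.choose (j + 1) * (j + 1) := by
    have := Nat.add_one_mul_choose_eq (N - 1) j
    rw [show N - 1 + 1 = N from by omega] at this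
    exact this
  have h2 : N.choose (j + 1) * (j + 1) = N.choose j * (N - j) := Nat.choose_succ_right_eq N j
  have h3 : N * (N - 1).choose j = N.choose j * (N - j) := h1.trans h2
  have := congrArg (fun t : ℕ => (t : ℝ)) h3
  push_cast [Nat.cast_sub hj] at this
  linarith

theorem newton_multiset : ∀ (N : ℕ) (s : Multiset ℝ), Multiset.card s = N → ∀ k, 1 ≤ k →
    s.esymm (k-1) * s.esymm (k+1) * (N.choose k : ℝ)^2
      ≤ (s.esymm k)^2 * (N.choose (k-1) : ℝ) * (N.choose (k+1) : ℝ) := by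
  intro N
  induction N using Nat.strong_induction_on with
  | _ N IH =>
    intro s hs k hk
    rcases lt_trichotomy N (k+1) with hN | hN | hN
    · rw [multiset_esymm_eq_zero (show Multiset.card s < k + 1 by omega), mul_zero, zero_mul]
      positivity
    · -- N = k + 1 : top case
      subst hN
      obtain ⟨x, hx⟩ := exists_fin_fun s (k+1) hs
      have he : ∀ j, s.esymm j = esymm j x := by
        intro j; rw [← hx, ← esymm_eq_multiset]
      have htop := newton_top (M := k+1) (by omega) x
      rw [show k + 1 - 1 = k from by omega] at htop
      rw [he (k-1), he (k+1), he k, show k - 1 = k + 1 - 2 from by omega,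
        Nat.choose_succ_self_right, Nat.choose_self, Nat.cast_one, mul_one]
      exact htop
    · -- N > k + 1 : derivative reduction
      have hN1 : 1 ≤ N := by omega
      obtain ⟨t, hcard, hrel⟩ := deriv_step s N hs hN1
      have hIH := IH (N-1) (by omega) t hcard k hk
      -- abbreviations
      have hr1 := hrel (k-1) (by omega)
      have hr2 := hrel k (by omega)
      have hr3 := hrel (k+1) (by omega)
      have hc1 := choose_cast_id (show k-1 ≤ N by omega) hN1
      have hc2 := choose_cast_id (show k ≤ N by omega) hN1
      have hc3 := choose_cast_id (show k+1 ≤ N by omega) hN1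
      push_cast [Nat.cast_sub hk] at hr1 hr2 hr3 hc1 hc2 hc3
      set u1 := s.esymm (k-1); set u2 := s.esymm k; set u3 := s.esymm (k+1)
      set v1 := t.esymm (k-1); set v2 := t.esymm k; set v3 := t.esymm (k+1)
      set c1 := (N.choose (k-1) : ℝ); set c2 := (N.choose k : ℝ); set c3 := (N.choose (k+1) : ℝ)
      set d1 := ((N-1).choose (k-1) : ℝ); set d2 := ((N-1).choose k : ℝ)
      set d3 := ((N-1).choose (k+1) : ℝ)
      have hkN : (k:ℝ) + 1 < (N:ℝ) := by exact_mod_cast (show k + 1 < N by omega)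
      have hN4 : (0:ℝ) < (N:ℝ)^4 := by positivity
      have hIH4 : (N:ℝ)^4 * (v1 * v3 * d2^2) ≤ (N:ℝ)^4 * (v2^2 * d1 * d3) :=
        mul_le_mul_of_nonneg_left hIH hN4.le
      have lhs_eq : (N:ℝ)^4 * (v1 * v3 * d2^2)
          = (((N:ℝ) - ((k:ℝ)-1)) * ((N:ℝ) - ((k:ℝ)+1)) * ((N:ℝ) - (k:ℝ))^2)
            * (u1 * u3 * c2^2) := by
        linear_combination ((N:ℝ)*v3*((N:ℝ)*d2)^2) * hr1
          + (((N:ℝ) - ((k:ℝ)-1))*u1*((N:ℝ)*d2)^2) * hr3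
          + (((N:ℝ) - ((k:ℝ)-1))*u1*((N:ℝ) - ((k:ℝ)+1))*u3*((N:ℝ)*d2 + ((N:ℝ) - (k:ℝ))*c2)) * hc2
      have rhs_eq : (N:ℝ)^4 * (v2^2 * d1 * d3)
          = (((N:ℝ) - ((k:ℝ)-1)) * ((N:ℝ) - ((k:ℝ)+1)) * ((N:ℝ) - (k:ℝ))^2)
            * (u2^2 * c1 * c3) := by
        linear_combination (((N:ℝ)*v2 + ((N:ℝ) - (k:ℝ))*u2)*((N:ℝ)*d1)*((N:ℝ)*d3)) * hr2
          + ((((N:ℝ) - (k:ℝ))*u2)^2*((N:ℝ)*d3)) * hc1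
          + ((((N:ℝ) - (k:ℝ))*u2)^2*(((N:ℝ) - ((k:ℝ)-1))*c1)) * hc3
      rw [lhs_eq, rhs_eq] at hIH4
      have hP : (0:ℝ) < ((N:ℝ) - ((k:ℝ)-1)) * ((N:ℝ) - ((k:ℝ)+1)) * ((N:ℝ) - (k:ℝ))^2 := by
        have h1 : (0:ℝ) < (N:ℝ) - ((k:ℝ)-1) := by linarith
        have h2 : (0:ℝ) < (N:ℝ) - ((k:ℝ)+1) := by linarith
        have h3 : (0:ℝ) < (N:ℝ) - (k:ℝ) := by linarith
        positivity
      exact le_of_mul_le_mul_left hIH4 hP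

lemma multiset_esymm_zero (s : Multiset ℝ) : s.esymm 0 = 1 := by
  rw [Multiset.esymm, Multiset.powersetCard_zero_left]
  simp

lemma multiset_esymm_cons (r : ℝ) (s : Multiset ℝ) (j : ℕ) :
    (r ::ₘ s).esymm (j+1) = r * s.esymm j + s.esymm (j+1) := by
  rw [Multiset.esymm, Multiset.powersetCard_cons, Multiset.map_add, Multiset.sum_add,
    Multiset.map_map]
  rw [Multiset.esymm, Multiset.esymm]
  have : ∀ t : Multiset ℝ, (Multiset.prod ∘ Multiset.cons r) t = r * t.prod := by
    intro t; simp
  rw [Multiset.map_congr rfl (fun t _ => this t), ← Multiset.sum_map_mul_left]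
  ring

lemma multiset_esymm_cons_zero (s : Multiset ℝ) (k : ℕ) :
    ((0:ℝ) ::ₘ s).esymm k = s.esymm k := by
  cases k with
  | zero => rw [multiset_esymm_zero, multiset_esymm_zero]
  | succ j => rw [multiset_esymm_cons, zero_mul, zero_add]

/-- the multiset of values of `x` with index `i` deleted -/
noncomputable def delMS {n : ℕ} (i : Fin n) (x : Fin n → ℝ) : Multiset ℝ :=
  (Finset.univ.val.erase i).map x

lemma delMS_card {n : ℕ} (i : Fin n) (x : Fin n → ℝ) :
    Multiset.card (delMS i x) = n - 1 := by
  rw [delMS, Multiset.card_map, Multiset.card_erase_of_mem (Finset.mem_univ_val i)]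
  simp

lemma univ_val_eq_cons {n : ℕ} (i : Fin n) :
    (Finset.univ.val : Multiset (Fin n)) = i ::ₘ Finset.univ.val.erase i :=
  (Multiset.cons_erase (Finset.mem_univ_val i)).symm

lemma esymm_eq_cons {n : ℕ} (i : Fin n) (x : Fin n → ℝ) (k : ℕ) :
    esymm k x = ((x i) ::ₘ delMS i x).esymm k := by
  rw [esymm_eq_multiset, delMS]
  congr 1
  rw [← Multiset.map_cons, ← univ_val_eq_cons]

lemma esymmAt_eq_delMS {n : ℕ} (k : ℕ) (i : Fin n) (x : Fin n → ℝ) :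
    esymmAt k i x = (delMS i x).esymm k := by
  rw [esymmAt, esymm_eq_cons i (Function.update x i 0) k, Function.update_self,
    multiset_esymm_cons_zero]
  congr 1
  rw [delMS, delMS]
  apply Multiset.map_congr rfl
  intro j hj
  have hne : j ≠ i := ((Finset.univ.nodup).mem_erase_iff.mp hj).1
  exact Function.update_of_ne hne 0 x

lemma esymm_rec {n : ℕ} (k : ℕ) (i : Fin n) (x : Fin n → ℝ) :
    esymm (k+1) x = x i * esymmAt k i x + esymmAt (k+1) i x := by
  rw [esymm_eq_cons i x (k+1), multiset_esymm_cons, esymmAt_eq_delMS, esymmAt_eq_delMS]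

lemma esymmAt_zero {n : ℕ} (i : Fin n) (x : Fin n → ℝ) : esymmAt 0 i x = 1 := by
  rw [esymmAt_eq_delMS, multiset_esymm_zero]

lemma choose_logconcave (N j : ℕ) : N.choose j * N.choose (j+2) ≤ N.choose (j+1)^2 := by
  rcases lt_or_ge N (j+2) with h | h
  · rw [Nat.choose_eq_zero_of_lt h, mul_zero]
    exact Nat.zero_le _
  · have e1 : N.choose (j+1) * (j+1) = N.choose j * (N - j) := Nat.choose_succ_right_eq N j
    have e2 : N.choose (j+2) * (j+2) = N.choose (j+1) * (N - (j+1)) :=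
      Nat.choose_succ_right_eq N (j+1)
    have key : (N.choose j * N.choose (j+2)) * ((N-j)*(j+2))
        ≤ (N.choose (j+1)^2) * ((N-j)*(j+2)) := by
      calc (N.choose j * N.choose (j+2)) * ((N-j)*(j+2))
          = (N.choose j * (N-j)) * (N.choose (j+2) * (j+2)) := by ring
        _ = (N.choose (j+1) * (j+1)) * (N.choose (j+1) * (N-(j+1))) := by rw [← e1, e2]
        _ = N.choose (j+1)^2 * ((j+1) * (N-(j+1))) := by ring
        _ ≤ N.choose (j+1)^2 * ((j+2) * (N-j)) :=
            Nat.mul_le_mul_left _ (Nat.mul_le_mul (by omega) (by omega))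
        _ = N.choose (j+1)^2 * ((N-j)*(j+2)) := by ring
    exact Nat.le_of_mul_le_mul_right key (Nat.mul_pos (by omega) (by omega))

lemma newton_weak_ms (s : Multiset ℝ) (k : ℕ) (hk : 1 ≤ k) (hkN : k ≤ Multiset.card s) :
    s.esymm (k-1) * s.esymm (k+1) ≤ (s.esymm k)^2 := by
  set N := Multiset.card s with hN
  have hfull := newton_multiset N s hN.symm k hk
  have hlog : (((N.choose (k-1)) * (N.choose (k+1)) : ℕ) : ℝ) ≤ ((N.choose k : ℕ) : ℝ)^2 := by
    have := choose_logconcave N (k-1)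
    rw [show k - 1 + 2 = k + 1 by omega, show k - 1 + 1 = k by omega] at this
    exact_mod_cast this
  have hCpos : (0:ℝ) < ((N.choose k : ℕ) : ℝ)^2 := by
    have : 0 < N.choose k := Nat.choose_pos hkN
    positivity
  have step : (s.esymm k)^2 * (N.choose (k-1) : ℝ) * (N.choose (k+1) : ℝ)
      ≤ (s.esymm k)^2 * ((N.choose k : ℝ))^2 := by
    have h2 : (0:ℝ) ≤ (s.esymm k)^2 := sq_nonneg _
    push_cast at hlog
    nlinarith [hlog, h2]
  have := hfull.trans step
  exact le_of_mul_le_mul_right (by linarith [this]) hCpos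

lemma cone_restrict {n : ℕ} (k : ℕ) (hk1 : 1 ≤ k) (hkn : k ≤ n - 1) (x : Fin n → ℝ)
    (hcone : ∀ j, 1 ≤ j → j ≤ k → 0 < esymm j x) (i : Fin n) :
    0 < esymmAt (k-1) i x := by
  induction k with
  | zero => omega
  | succ K IH =>
    rw [show K + 1 - 1 = K by omega]
    rcases Nat.eq_zero_or_pos K with hK0 | hK1
    · subst hK0
      rw [esymmAt_zero]
      norm_num
    · -- key quantities
      have hu : 0 < esymmAt (K-1) i x := by
        apply IH (by omega) (by omega)
        intro j h1 h2
        exact hcone j h1 (by omega)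
      rw [esymmAt_eq_delMS] at hu ⊢
      set u := (delMS i x).esymm (K-1) with hudef
      set q := (delMS i x).esymm K with hqdef
      set w := (delMS i x).esymm (K+1) with hwdef
      have e1 : esymm K x = x i * u + q := by
        have := esymm_rec (K-1) i x
        rw [show K - 1 + 1 = K by omega] at this
        rw [this, esymmAt_eq_delMS, esymmAt_eq_delMS]
      have e2 : esymm (K+1) x = x i * q + w := by
        rw [esymm_rec K i x, esymmAt_eq_delMS, esymmAt_eq_delMS]
      have h1 : 0 < x i * u + q := by rw [← e1]; exact hcone K hK1 (by omega)
      have h2 : 0 < x i * q + w := by rw [← e2]; exact hcone (K+1) (by omega) le_rfl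
      have hw : u * w ≤ q^2 := by
        have hcd : K ≤ Multiset.card (delMS i x) := by rw [delMS_card]; omega
        have := newton_weak_ms (delMS i x) K hK1 hcd
        rwa [← hudef, ← hqdef, ← hwdef] at this
      by_contra hq
      push_neg at hq
      have hx : 0 < x i := by
        by_contra hxle
        push_neg at hxle
        nlinarith [mul_nonneg (neg_nonneg.2 hxle) hu.le]
      nlinarith [mul_pos hu h2, mul_nonneg (neg_nonneg.2 hq) h1.le, hw]

lemma maclaurin (s : Multiset ℝ) (N : ℕ) (hcard : Multiset.card s = N) :
    ∀ j, 1 ≤ j → j + 1 ≤ N →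
      (∀ l, 1 ≤ l → l ≤ j → 0 < s.esymm l) →
      s.esymm (j+1) / (N.choose (j+1) : ℝ)
        ≤ (s.esymm 1 / (N:ℝ)) * (s.esymm j / (N.choose j : ℝ)) := by
  have hCpos : ∀ l, l ≤ N → (0:ℝ) < (N.choose l : ℝ) := by
    intro l hl
    exact_mod_cast Nat.choose_pos hl
  intro j hj1
  induction j, hj1 using Nat.le_induction with
  | base =>
    intro hN hpos
    have hnew := newton_multiset N s hcard 1 le_rfl
    rw [show (1:ℕ) - 1 = 0 from rfl, multiset_esymm_zero, Nat.choose_zero_right] at hnew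
    rw [Nat.choose_one_right] at hnew ⊢
    have hC2 : (0:ℝ) < (N.choose 2 : ℝ) := hCpos 2 hN
    have hNpos : (0:ℝ) < (N:ℝ) := by
      have : 0 < N := by omega
      exact_mod_cast this
    rw [div_mul_div_comm, div_le_div_iff₀ hC2 (by positivity)]
    push_cast at hnew ⊢
    nlinarith [hnew]
  | succ j hj IH =>
    intro hN hpos
    have hnew := newton_multiset N s hcard (j+1) (by omega)
    rw [show j + 1 - 1 = j by omega] at hnew
    have hCj : (0:ℝ) < (N.choose j : ℝ) := hCpos j (by omega)
    have hCj1 : (0:ℝ) < (N.choose (j+1) : ℝ) := hCpos (j+1) (by omega)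
    have hCj2 : (0:ℝ) < (N.choose (j+2) : ℝ) := hCpos (j+2) (by omega)
    have hNpos : (0:ℝ) < (N:ℝ) := by
      have : 0 < N := by omega
      exact_mod_cast this
    set p1 := s.esymm 1 / (N:ℝ) with hp1def
    set pj := s.esymm j / (N.choose j : ℝ) with hpjdef
    set pj1 := s.esymm (j+1) / (N.choose (j+1) : ℝ) with hpj1def
    set pj2 := s.esymm (j+2) / (N.choose (j+2) : ℝ) with hpj2def
    have hIH : pj1 ≤ p1 * pj := IH (by omega) (fun l h1 h2 => hpos l h1 (by omega))
    have hpjpos : 0 < pj := by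
      rw [hpjdef]
      exact div_pos (hpos j (by omega) (by omega)) hCj
    have hpj1pos : 0 < pj1 := by
      rw [hpj1def]
      exact div_pos (hpos (j+1) (by omega) le_rfl) hCj1
    have hp1pos : 0 < p1 := by
      rw [hp1def]
      exact div_pos (hpos 1 (by omega) (by omega)) hNpos
    have hpnew : pj * pj2 ≤ pj1^2 := by
      rw [hpjdef, hpj2def, hpj1def, div_mul_div_comm, div_pow, div_le_div_iff₀ (by positivity) (by positivity)]
      push_cast at hnew ⊢
      nlinarith [hnew]
    show pj2 ≤ p1 * pj1
    rcases le_or_gt pj2 0 with hc | hc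
    · nlinarith [mul_pos hp1pos hpj1pos]
    · nlinarith [mul_le_mul_of_nonneg_left hIH hpj1pos.le, hpnew, mul_pos hpjpos hc]

lemma esymm_one' {n : ℕ} (x : Fin n → ℝ) : esymm 1 x = ∑ i, x i := by
  rw [esymm, Finset.powersetCard_one, Finset.sum_map]
  simp

/-- Gursky–Streets / Petrov eigenvalue inequality: if `n = 2m`, `aᵢ = (λᵢ - σ₁(λ)/(2(n-1)))/(n-2)`
and `a ∈ Γ_m⁺`, then for every `i`, `(n-1) σ_m(a) ≤ λᵢ σ_{m-1;i}(a)`. -/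
theorem crooshineq {m : ℕ} (hm : 2 ≤ m) (n : ℕ) (hn : n = 2 * m)
    (lam a : Fin n → ℝ)
    (ha : ∀ i, a i = (1 / ((n : ℝ) - 2)) * (lam i - esymm 1 lam / (2 * ((n : ℝ) - 1))))
    (hcone : ∀ j, 1 ≤ j → j ≤ m → 0 < esymm j a) :
    ∀ i, ((n : ℝ) - 1) * esymm m a ≤ lam i * esymmAt (m - 1) i a := by
  intro i
  have hn4 : 4 ≤ n := by omega
  have hnR : (4:ℝ) ≤ (n:ℝ) := by exact_mod_cast hn4
  have h2ne : ((n:ℝ) - 2) ≠ 0 := by linarith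
  have h1ne : (2 * ((n:ℝ) - 1)) ≠ 0 := by linarith
  -- the first elementary symmetric functions
  have hsuma : esymm 1 a = esymm 1 lam / (2 * ((n:ℝ) - 1)) := by
    rw [esymm_one' a, Finset.sum_congr rfl (fun i _ => ha i), ← Finset.mul_sum,
      Finset.sum_sub_distrib, Finset.sum_const, Finset.card_univ, Fintype.card_fin,
      ← esymm_one' lam]
    rw [nsmul_eq_mul]
    have : (n:ℝ) - 1 ≠ 0 := by linarith
    field_simp
    ring
  have hlam : lam i = ((n:ℝ) - 2) * a i + esymm 1 a := by
    rw [hsuma, ha i]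
    field_simp
    ring
  -- positivity of the restricted symmetric functions
  have hconeAt : ∀ j, 1 ≤ j → j ≤ m - 1 → 0 < esymmAt j i a := by
    intro j h1 h2
    have := cone_restrict (j+1) (by omega) (by omega) a
      (fun l hl1 hl2 => hcone l hl1 (by omega)) i
    rwa [show j + 1 - 1 = j by omega] at this
  -- Maclaurin inequality on the deleted tuple
  have hmac : ((n:ℝ) - 1) * esymmAt m i a ≤ esymmAt 1 i a * esymmAt (m-1) i a := by
    rw [esymmAt_eq_delMS, esymmAt_eq_delMS, esymmAt_eq_delMS]
    have hcd := delMS_card i a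
    have hmac0 := maclaurin (delMS i a) (n-1) hcd (m-1) (by omega) (by omega)
      (fun l h1 h2 => by rw [← esymmAt_eq_delMS]; exact hconeAt l h1 h2)
    rw [show m - 1 + 1 = m by omega] at hmac0
    -- choose symmetry : C(n-1, m-1) = C(n-1, m)
    have hsymm : (n-1).choose m = (n-1).choose (m-1) := by
      have := Nat.choose_symm (show m - 1 ≤ n - 1 by omega) (n := n-1)
      rwa [show n - 1 - (m - 1) = m by omega] at this
    rw [hsymm] at hmac0
    set E1 := (delMS i a).esymm 1
    set Em1 := (delMS i a).esymm (m-1)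
    set Em := (delMS i a).esymm m
    set C := ((n-1).choose (m-1) : ℝ) with hCdef
    have hCpos : (0:ℝ) < C := by
      rw [hCdef]
      exact_mod_cast Nat.choose_pos (show m - 1 ≤ n - 1 by omega)
    have hNpos : (0:ℝ) < ((n-1:ℕ):ℝ) := by
      exact_mod_cast (show 0 < n - 1 by omega)
    rw [div_mul_div_comm, div_le_div_iff₀ hCpos (by positivity)] at hmac0
    have hcast : ((n-1:ℕ):ℝ) = (n:ℝ) - 1 := by
      push_cast [Nat.cast_sub (show 1 ≤ n by omega)]
      ring
    rw [hcast] at hmac0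
    have : (((n:ℝ) - 1) * Em) * C ≤ (E1 * Em1) * C := by nlinarith [hmac0]
    exact le_of_mul_le_mul_right this hCpos
  -- recursion identities
  have hrec_m : esymm m a = a i * esymmAt (m-1) i a + esymmAt m i a := by
    have := esymm_rec (m-1) i a
    rwa [show m - 1 + 1 = m by omega] at this
  have hrec_1 : esymm 1 a = a i + esymmAt 1 i a := by
    have := esymm_rec 0 i a
    rwa [esymmAt_zero, mul_one] at this
  rw [hlam, hrec_m, hrec_1]
  nlinarith [hmac]
end

section
/- Let n = 2m and let a₁,…,a_{n−1} be real numbers such that the polynomial f(x) = ∏_{i=1}^{n−1}(x − a_i) has all real roots, and assume moreover that for some real a_n the roots b₁,…,b_m of g(x) := f^{(m−1)}(x) satisfy the conclusion of Rolle iterations from the full polynomial f(x)(x − a_n) having all positive coefficients. Then (n−1)·σ_m(a₁,…,a_{n−1}) ≤ σ₁(a₁,…,a_{n−1})·σ_{m−1}(a₁,…,a_{n−1}) is equivalent to m²·σ_m(b₁,…,b_m) ≤ σ₁(b₁,…,b_m)·σ_{m−1}(b₁,…,b_m). -/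
/-!
Comparing the coefficients of `X^(M-k)` in `f^(j) = c ∏ (X - bᵢ)`, where `f = ∏ (X - aᵢ)` has
degree `N = M + j`, gives `σ_k(a) / C(N,k) = σ_k(b) / C(M,k)`: derivatives preserve normalized
elementary symmetric functions. For `N = 2m - 1`, `M = m` both inequalities then say
`σ̃_m ≤ σ̃_1 σ̃_{m-1}`, after multiplying out positive constants.
-/

open Finset Polynomial

lemma coeff_prod_X_sub_C_eq_esymm {N : ℕ} (x : Fin N → ℝ) {k : ℕ} (hk : k ≤ N) :
    (∏ i, (X - C (x i))).coeff (N - k) = (-1) ^ k * esymm k x := by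
  have hprod : ∏ i, (X - C (x i)) = ((univ.val.map x).map fun t => X - C t).prod := by
    rw [Multiset.map_map]; rfl
  rw [hprod, Multiset.prod_X_sub_C_coeff _ (by simp), Multiset.card_map, card_val, card_univ,
    Fintype.card_fin, Nat.sub_sub_self hk, Finset.esymm_map_val]
  rfl

section IterateDerivative

variable {N M j : ℕ} {a : Fin N → ℝ} {b : Fin M → ℝ} {c : ℝ}

lemma descFactorial_mul_esymm_of_iterate_derivative (hN : N = M + j)
    (hder : derivative^[j] (∏ i, (X - C (a i))) = C c * ∏ i, (X - C (b i)))
    {k : ℕ} (hk : k ≤ M) :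
    ((N - k).descFactorial j : ℝ) * esymm k a = c * esymm k b := by
  have h := congrArg (coeff · (M - k)) hder
  simp only [coeff_iterate_derivative, coeff_C_mul, nsmul_eq_mul] at h
  rw [show M - k + j = N - k by omega, coeff_prod_X_sub_C_eq_esymm a (by omega),
    coeff_prod_X_sub_C_eq_esymm b hk] at h
  have hsign : ((-1 : ℝ) ^ k) ≠ 0 := by simp
  apply mul_left_cancel₀ hsign
  linear_combination h

lemma choose_mul_descFactorial_eq {k : ℕ} (hk : k ≤ M) :
    M.choose k * (M + j).descFactorial j = (M + j).choose k * (M + j - k).descFactorial j := by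
  have h := Nat.choose_mul (n := M + j) hk
  rw [Nat.descFactorial_eq_factorial_mul_choose, Nat.descFactorial_eq_factorial_mul_choose,
    ← Nat.choose_symm_add, ← Nat.choose_symm_of_eq_add (show M + j - k = M - k + j by omega)]
  calc M.choose k * (j.factorial * (M + j).choose M)
      = j.factorial * ((M + j).choose M * M.choose k) := by ring
    _ = (M + j).choose k * (j.factorial * (M + j - k).choose (M - k)) := by rw [h]; ring

theorem choose_mul_esymm_eq_of_iterate_derivative (hN : N = M + j)
    (hder : derivative^[j] (∏ i, (X - C (a i))) = C c * ∏ i, (X - C (b i)))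
    {k : ℕ} (hk : k ≤ M) :
    (M.choose k : ℝ) * esymm k a = N.choose k * esymm k b := by
  have hc : (N.descFactorial j : ℝ) = c := by
    simpa [esymm] using descFactorial_mul_esymm_of_iterate_derivative hN hder (Nat.zero_le M)
  have hcoeff := descFactorial_mul_esymm_of_iterate_derivative hN hder hk
  have hchoose : (M.choose k : ℝ) * N.descFactorial j = N.choose k * (N - k).descFactorial j := by
    subst hN; exact_mod_cast choose_mul_descFactorial_eq hk
  have hD : ((N - k).descFactorial j : ℝ) ≠ 0 := by
    exact_mod_cast (Nat.descFactorial_pos.mpr (by omega)).ne'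
  apply mul_left_cancel₀ hD
  linear_combination (M.choose k : ℝ) * hcoeff - M.choose k * esymm k b * hc + esymm k b * hchoose

end IterateDerivative

lemma le_iff_le_of_mul_sub_eq_mul_sub {R : Type*} [Ring R] [LinearOrder R] [IsStrictOrderedRing R]
    {p q x y u v : R} (hp : 0 < p) (hq : 0 < q) (h : p * (y - x) = q * (v - u)) :
    x ≤ y ↔ u ≤ v := by
  rw [← sub_nonneg, ← sub_nonneg (a := v), ← mul_nonneg_iff_of_pos_left hp, h,
    mul_nonneg_iff_of_pos_left hq]

theorem ineq_equiv_of_derivative_roots_general {m : ℕ} (hm : 1 ≤ m) (n : ℕ) (hn : n = 2 * m)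
    (a : Fin (n - 1) → ℝ) (b : Fin m → ℝ) (c : ℝ)
    (hder : (Polynomial.derivative)^[m - 1] (∏ i, (X - C (a i)))
      = C c * ∏ i, (X - C (b i))) :
    (((n : ℝ) - 1) * esymm m a ≤ esymm 1 a * esymm (m - 1) a) ↔
      ((m : ℝ) ^ 2 * esymm m b ≤ esymm 1 b * esymm (m - 1) b) := by
  have hdeg : n - 1 = m + (m - 1) := by omega
  have vieta {k : ℕ} (hk : k ≤ m) := choose_mul_esymm_eq_of_iterate_derivative hdeg hder hk
  have h1 := vieta hm
  have hpred := vieta (Nat.sub_le m 1)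
  have htop := vieta le_rfl
  rw [Nat.choose_one_right, Nat.choose_one_right, Nat.cast_sub (by omega), Nat.cast_one] at h1
  rw [Nat.choose_symm hm, Nat.choose_one_right] at hpred
  rw [Nat.choose_self, Nat.choose_symm_of_eq_add hdeg] at htop
  set binom := ((n - 1).choose (m - 1) : ℝ)
  have hbinom : 0 < binom := Nat.cast_pos.mpr (Nat.choose_pos (by omega))
  have hn1 : (0 : ℝ) < n - 1 := sub_pos.mpr (by exact_mod_cast (by omega : 1 < n))
  refine le_iff_le_of_mul_sub_eq_mul_sub (p := (m : ℝ) ^ 2) (q := (n - 1) * binom)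
    (by positivity) (mul_pos hn1 hbinom) ?_
  linear_combination (m * esymm 1 a) * hpred + (binom * esymm (m - 1) b) * h1
    - (m ^ 2 * (n - 1)) * htop

/-- For `n = 2m`, if `b₁,…,b_m` are the roots of the `(m-1)`-st derivative of
`f(x) = ∏_{i=1}^{n-1}(x - aᵢ)`, then the inequality `(n-1)σ_m(a) ≤ σ₁(a)σ_{m-1}(a)` is
equivalent to `m²σ_m(b) ≤ σ₁(b)σ_{m-1}(b)`. -/
theorem ineq_equiv_of_derivative_roots {m : ℕ} (hm : 1 ≤ m) (n : ℕ) (hn : n = 2 * m)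
    (a : Fin (n - 1) → ℝ) (b : Fin m → ℝ) (c : ℝ) (hc : c ≠ 0)
    (hder : (Polynomial.derivative)^[m - 1] (∏ i, (X - C (a i)))
      = C c * ∏ i, (X - C (b i))) :
    (((n : ℝ) - 1) * esymm m a ≤ esymm 1 a * esymm (m - 1) a) ↔
      ((m : ℝ) ^ 2 * esymm m b ≤ esymm 1 b * esymm (m - 1) b) :=
  ineq_equiv_of_derivative_roots_general hm n hn a b c hder
end

section
/- Let A be a symmetric positive-definite n×n real matrix with eigenvalues λ₁ ≥ … ≥ λₙ > 0, and let a_i = (1/(n−2))(λ_i − (∑_j λ_j)/(2(n−1))) for n = 2m with σ_j(a) > 0 for 1 ≤ j ≤ m. Then the matrix inequality (n−1)·A^{-1} ≤ (1/σ_m(a))·T_{m−1}(a) holds, where T_{m−1}(a) is the diagonal matrix with entries σ_{m−1;i}(a). -/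
open Finset Polynomial

namespace MyNI
open Multiset

lemma mesymm_zero (s : Multiset ℝ) : s.esymm 0 = 1 := by
  simp [Multiset.esymm, powersetCard_zero_left]

lemma mesymm_of_lt {s : Multiset ℝ} {k : ℕ} (h : Multiset.card s < k) : s.esymm k = 0 := by
  simp [Multiset.esymm, powersetCard_eq_empty _ h]

lemma mesymm_cons (x : ℝ) (t : Multiset ℝ) (k : ℕ) :
    (x ::ₘ t).esymm (k+1) = x * t.esymm k + t.esymm (k+1) := by
  simp only [Multiset.esymm, powersetCard_cons, Multiset.map_add, Multiset.sum_add,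
    Multiset.map_map]
  rw [add_comm]
  congr 1
  rw [← Multiset.sum_map_mul_left]
  exact congrArg _ (Multiset.map_congr rfl fun u _ => by simp)

lemma mesymm_one (s : Multiset ℝ) : s.esymm 1 = s.sum := by
  simp [Multiset.esymm, Multiset.powersetCard_one, Multiset.map_map, Function.comp_def]

lemma mesymm_card (s : Multiset ℝ) : s.esymm (Multiset.card s) = s.prod := by
  induction s using Multiset.induction with
  | empty => simp [mesymm_zero]
  | cons x t ih =>
    rw [Multiset.card_cons, mesymm_cons, ih, mesymm_of_lt (by simp), Multiset.prod_cons]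
    ring

/-- Cauchy–Schwarz for multisets. -/
lemma ms_cs (s : Multiset ℝ) :
    s.sum ^ 2 ≤ (Multiset.card s : ℝ) * (s.map (fun x => x ^ 2)).sum := by
  induction s using Multiset.induction with
  | empty => simp
  | cons x t ih =>
    have hq : 0 ≤ (t.map (fun x => x ^ 2)).sum :=
      Multiset.sum_nonneg (by intro y hy; obtain ⟨z, _, rfl⟩ := Multiset.mem_map.1 hy; positivity)
    simp only [Multiset.sum_cons, Multiset.card_cons, Multiset.map_cons, Nat.cast_add,
      Nat.cast_one]
    rcases Multiset.empty_or_exists_mem t with rfl | ⟨y, hy⟩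
    · simp only [Multiset.sum_zero, Multiset.card_zero, Multiset.map_zero, Nat.cast_zero,
        add_zero, zero_add]
      nlinarith [sq_nonneg x]
    · have hM1 : (1:ℝ) ≤ (Multiset.card t : ℝ) := by
        exact_mod_cast Multiset.card_pos.2 (fun h => by simp [h] at hy)
      set M := (Multiset.card t : ℝ)
      set S := t.sum
      set q := (t.map (fun x => x ^ 2)).sum
      nlinarith [sq_nonneg (M * x - S), ih, mul_nonneg (by linarith : (0:ℝ) ≤ M + 1)
        (by linarith : (0:ℝ) ≤ M * q - S ^ 2)]

/-- sum squared identity -/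
lemma ms_sq (s : Multiset ℝ) :
    s.sum ^ 2 = (s.map (fun x => x ^ 2)).sum + 2 * s.esymm 2 := by
  induction s using Multiset.induction with
  | empty => simp [mesymm_of_lt]; exact mesymm_of_lt (by simp)
  | cons x t ih =>
    have h2 := mesymm_cons x t 1
    simp only [Nat.reduceAdd] at h2
    simp only [Multiset.sum_cons, Multiset.map_cons, Multiset.sum_cons, h2, mesymm_one]
    nlinarith [ih]

/-- reciprocal identity -/
lemma ms_recip (s : Multiset ℝ) (h0 : (0:ℝ) ∉ s) :
    ∀ r ≤ Multiset.card s, (s.map (·⁻¹)).esymm r * s.prod = s.esymm (Multiset.card s - r) := by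
  induction s using Multiset.induction with
  | empty =>
    intro r hr
    simp only [Multiset.card_zero, Nat.le_zero] at hr
    subst hr
    simp [mesymm_zero]
  | cons x t ih =>
    intro r hr
    have hx : x ≠ 0 := fun h => h0 (by simp [h])
    have h0t : (0:ℝ) ∉ t := fun h => h0 (Multiset.mem_cons_of_mem h)
    simp only [Multiset.card_cons] at hr ⊢
    rcases r with _ | q
    · simp only [mesymm_zero, one_mul, Nat.sub_zero]
      rw [show Multiset.card t + 1 = Multiset.card (x ::ₘ t) by simp, mesymm_card]
    · simp only [Multiset.map_cons, Multiset.prod_cons, mesymm_cons]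
      rcases eq_or_lt_of_le hr with heq | hlt
      · obtain rfl : q = Multiset.card t := by omega
        have hz : (t.map (·⁻¹)).esymm (Multiset.card t + 1) = 0 := mesymm_of_lt (by simp)
        rw [hz, add_zero]
        have hIH := ih h0t (Multiset.card t) le_rfl
        rw [Nat.sub_self, mesymm_zero] at hIH
        rw [show Multiset.card t + 1 - (Multiset.card t + 1) = 0 by omega, mesymm_zero]
        set E := (t.map (·⁻¹)).esymm (Multiset.card t)
        rw [show x⁻¹ * E * (x * t.prod) = (x⁻¹ * x) * (E * t.prod) by ring,
          inv_mul_cancel₀ hx, one_mul, hIH]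
      · have hqM : q + 1 ≤ Multiset.card t := by omega
        have ih1 := ih h0t q (by omega)
        have ih2 := ih h0t (q+1) hqM
        rw [show Multiset.card t + 1 - (q + 1) = (Multiset.card t - (q+1)) + 1 by omega,
          mesymm_cons, ← ih2,
          show Multiset.card t - (q+1) + 1 = Multiset.card t - q by omega, ← ih1]
        set E1 := (t.map (·⁻¹)).esymm q
        set E2 := (t.map (·⁻¹)).esymm (q+1)
        rw [show (x⁻¹ * E1 + E2) * (x * t.prod) = (x⁻¹ * x) * (E1 * t.prod) + x * (E2 * t.prod)
          by ring, inv_mul_cancel₀ hx, one_mul, add_comm]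


lemma nat_id (N r : ℕ) (hN : 1 ≤ N) :
    N * Nat.choose (N-1) r = Nat.choose N r * (N - r) := by
  obtain ⟨M, rfl⟩ : ∃ M, N = M + 1 := ⟨N - 1, by omega⟩
  simpa using (Nat.add_one_mul_choose_eq M r).trans (Nat.choose_succ_right_eq (M+1) r)

/-- Newton's inequality for arbitrary real multisets. -/
lemma newton (N : ℕ) : ∀ (s : Multiset ℝ), Multiset.card s = N → ∀ j : ℕ, j + 2 ≤ N →
    s.esymm j / (N.choose j : ℝ) * (s.esymm (j+2) / (N.choose (j+2) : ℝ)) ≤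
      (s.esymm (j+1) / (N.choose (j+1) : ℝ)) ^ 2 := by
  induction N using Nat.strong_induction_on with
  | _ N IH =>
  intro s hcard j hj
  rcases eq_or_lt_of_le hj with hNeq | hNlt
  · -- base case N = j + 2
    subst hNeq
    by_cases h0 : (0:ℝ) ∈ s
    · have hprod : s.prod = 0 := Multiset.prod_eq_zero h0
      have he : s.esymm (j+2) = 0 := by rw [← hcard, mesymm_card, hprod]
      rw [he]
      simp only [zero_div, mul_zero]
      positivity
    · set z := s.map (·⁻¹) with hz
      have hP : s.prod ≠ 0 := fun h => h0 ((Multiset.prod_eq_zero_iff).1 h)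
      have h2 := ms_recip s h0 2 (by omega)
      have h1 := ms_recip s h0 1 (by omega)
      rw [hcard, show j + 2 - 2 = j by omega] at h2
      rw [hcard, show j + 2 - 1 = j + 1 by omega, mesymm_one] at h1
      have h0' : s.esymm (j+2) = s.prod := by rw [← hcard, mesymm_card]
      have hsq := ms_sq z
      have hcs := ms_cs z
      have hcz : Multiset.card z = j + 2 := by rw [hz, Multiset.card_map, hcard]
      rw [hcz] at hcs
      push_cast at hcs
      set E1 := z.sum
      set E2 := z.esymm 2
      set Q := (z.map (fun x => x ^ 2)).sum
      -- choose values
      have hCtop : (Nat.choose (j+2) (j+2) : ℝ) = 1 := by rw [Nat.choose_self]; norm_num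
      have hC1 : (Nat.choose (j+2) (j+1) : ℝ) = (j:ℝ) + 2 := by
        rw [Nat.choose_succ_self_right]; push_cast; ring
      have h2C : 2 * (Nat.choose (j+2) j : ℝ) = ((j:ℝ)+2) * ((j:ℝ)+1) := by
        have := Nat.choose_succ_right_eq (j+2) j
        have h' : Nat.choose (j+2) (j+1) * (j+1) = Nat.choose (j+2) j * 2 := by
          simpa using this
        have := congrArg (Nat.cast : ℕ → ℝ) h'
        push_cast at this
        rw [Nat.choose_succ_self_right] at h'
        push_cast [← h'] at *
        nlinarith [this]
      have hCj : (0:ℝ) < (Nat.choose (j+2) j : ℝ) := by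
        exact_mod_cast Nat.choose_pos (by omega)
      -- rewrite esymm values
      rw [h0', hCtop, hC1, ← h2, ← h1, div_one]
      have hkeyid : (Nat.choose (j+2) j : ℝ) * E1^2 - ((j:ℝ)+2)^2 * E2
          = (((j:ℝ)+2)/2) * (((j:ℝ)+2) * Q - E1^2) := by
        linear_combination (E1^2/2) * h2C + (((j:ℝ)+2)^2/2) * hsq
      have hkey : ((j:ℝ)+2)^2 * E2 ≤ (Nat.choose (j+2) j : ℝ) * E1^2 := by
        have h1' : (0:ℝ) ≤ (((j:ℝ)+2)/2) * (((j:ℝ)+2) * Q - E1^2) :=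
          mul_nonneg (by positivity) (by linarith [hcs])
        linarith [hkeyid]
      rw [div_mul_eq_mul_div, div_pow, div_le_div_iff₀ hCj (by positivity)]
      nlinarith [mul_nonneg (sq_nonneg s.prod) (sub_nonneg.2 hkey)]
  · -- inductive step
    have hN1 : 1 ≤ N := by omega
    set P := (s.map fun x => (X:ℝ[X]) + C x).prod with hPdef
    have hmonic : P.Monic :=
      monic_multiset_prod_of_monic _ _ (fun a _ => monic_X_add_C a)
    have hdegP : P.natDegree = N := by
      have hmono : ∀ f ∈ s.map (fun x => (X:ℝ[X]) + C x), f.Monic := by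
        intro f hf
        obtain ⟨x, _, rfl⟩ := Multiset.mem_map.1 hf
        exact monic_X_add_C x
      rw [hPdef, natDegree_multiset_prod_of_monic _ hmono]
      rw [Multiset.map_map]
      simp [Function.comp_def, natDegree_X_add_C, Multiset.map_const', Multiset.sum_replicate,
        hcard]
    have hrootsP : P.roots = s.map Neg.neg := by
      have hmm : s.map (fun x => (X:ℝ[X]) + C x) = (s.map Neg.neg).map (fun r => X - C r) := by
        rw [Multiset.map_map]
        exact (Multiset.map_congr rfl (fun x _ => by simp [sub_eq_add_neg])).symm
      rw [hPdef, hmm, roots_multiset_prod_X_sub_C]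
    have hcardrootsP : Multiset.card P.roots = N := by rw [hrootsP]; simp [hcard]
    have hub2 : (derivative P).natDegree ≤ N - 1 := by
      have h' := natDegree_derivative_le P
      omega
    have hub : Multiset.card (derivative P).roots ≤ N - 1 := (card_roots' _).trans hub2
    have hlb : N ≤ Multiset.card (derivative P).roots + 1 := by
      rw [← hcardrootsP]; exact card_roots_le_derivative P
    have hcard' : Multiset.card (derivative P).roots = N - 1 := by omega
    have hdeg' : (derivative P).natDegree = N - 1 :=
      le_antisymm hub2 (hcard' ▸ card_roots' (derivative P))
    have hlead' : (derivative P).leadingCoeff = (N:ℝ) := by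
      have hc : P.coeff N = 1 := by rw [← hdegP]; exact hmonic.coeff_natDegree
      rw [Polynomial.leadingCoeff, hdeg', Polynomial.coeff_derivative,
        show N - 1 + 1 = N by omega, hc]
      have : ((N - 1 : ℕ) : ℝ) + 1 = (N : ℝ) := by
        exact_mod_cast congrArg (Nat.cast : ℕ → ℝ) (show N - 1 + 1 = N by omega)
      rw [this, one_mul]
    have hrecon : C ((N:ℝ)) * ((derivative P).roots.map fun a => X - C a).prod
        = derivative P := by
      rw [← hlead']
      exact C_leadingCoeff_mul_prod_multiset_X_sub_C (by rw [hcard', hdeg'])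
    set u := (derivative P).roots.map Neg.neg with hu
    have hcardu : Multiset.card u = N - 1 := by rw [hu, Multiset.card_map, hcard']
    have huprod : (u.map fun x => (X:ℝ[X]) + C x).prod
        = ((derivative P).roots.map fun a => X - C a).prod := by
      rw [hu, Multiset.map_map]
      exact congrArg _ (Multiset.map_congr rfl (fun a _ => by simp [sub_eq_add_neg]))
    have hcoeff : ∀ r, r ≤ N - 1 → (N:ℝ) * u.esymm r = ((N:ℝ) - r) * s.esymm r := by
      intro r hr
      have hPc : P.coeff (N - r) = s.esymm r := by
        rw [hPdef, Multiset.prod_X_add_C_coeff s (show N - r ≤ Multiset.card s by omega)]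
        rw [hcard, show N - (N - r) = r by omega]
      have hP'c : (derivative P).coeff (N - 1 - r) = s.esymm r * ((N:ℝ) - r) := by
        rw [Polynomial.coeff_derivative, show N - 1 - r + 1 = N - r by omega, hPc]
        congr 1
        have h1' : ((N - 1 - r : ℕ) : ℝ) + 1 = ((N - r : ℕ) : ℝ) := by
          exact_mod_cast congrArg (Nat.cast : ℕ → ℝ) (show N - 1 - r + 1 = N - r by omega)
        rw [h1', Nat.cast_sub (by omega : r ≤ N)]
      have hP'c2 : (derivative P).coeff (N - 1 - r) = (N:ℝ) * u.esymm r := by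
        rw [← hrecon, coeff_C_mul, ← huprod,
          Multiset.prod_X_add_C_coeff u (show N - 1 - r ≤ Multiset.card u by omega)]
        rw [hcardu, show N - 1 - (N - 1 - r) = r by omega]
      rw [← hP'c2, hP'c]; ring
    have hp : ∀ r, r ≤ N - 1 →
        u.esymm r / ((N-1).choose r : ℝ) = s.esymm r / (N.choose r : ℝ) := by
      intro r hr
      have hCn : (0:ℝ) < (N.choose r : ℝ) := by exact_mod_cast Nat.choose_pos (by omega)
      have hCn1 : (0:ℝ) < ((N-1).choose r : ℝ) := by exact_mod_cast Nat.choose_pos hr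
      rw [div_eq_div_iff (ne_of_gt hCn1) (ne_of_gt hCn)]
      have hid : (N:ℝ) * (((N-1).choose r : ℕ) : ℝ) = ((N.choose r : ℕ) : ℝ) * ((N:ℝ) - r) := by
        have := congrArg (Nat.cast : ℕ → ℝ) (nat_id N r hN1)
        push_cast [Nat.cast_sub (show r ≤ N by omega)] at this
        exact this
      have hNne : (N:ℝ) ≠ 0 := by positivity
      apply mul_left_cancel₀ hNne
      linear_combination ((N.choose r : ℕ) : ℝ) * (hcoeff r hr) - s.esymm r * hid
    have := IH (N-1) (by omega) u hcardu j (by omega)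
    rw [hp j (by omega), hp (j+1) (by omega), hp (j+2) (by omega)] at this
    exact this


/-- the polynomial with roots `-s` -/
noncomputable def pgen (s : Multiset ℝ) : ℝ[X] := (s.map fun x => (X:ℝ[X]) + C x).prod

lemma pgen_monic (s : Multiset ℝ) : (pgen s).Monic :=
  monic_multiset_prod_of_monic _ _ (fun a _ => monic_X_add_C a)

lemma pgen_natDegree (s : Multiset ℝ) : (pgen s).natDegree = Multiset.card s := by
  have hmono : ∀ f ∈ s.map (fun x => (X:ℝ[X]) + C x), f.Monic := by
    intro f hf
    obtain ⟨x, _, rfl⟩ := Multiset.mem_map.1 hf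
    exact monic_X_add_C x
  rw [pgen, natDegree_multiset_prod_of_monic _ hmono, Multiset.map_map]
  simp [Function.comp_def, natDegree_X_add_C, Multiset.map_const', Multiset.sum_replicate]

lemma shift_eval (s : Multiset ℝ) (j : ℕ) (hj : j ≤ Multiset.card s) (c : ℝ) :
    (s.map (fun x => x + c)).esymm j
      = (Polynomial.hasseDeriv (Multiset.card s - j) (pgen s)).eval c := by
  have hcomp : ((s.map (fun x => x + c)).map (fun x => (X:ℝ[X]) + C x)).prod
      = (pgen s).comp (X + C c) := by
    rw [pgen, Polynomial.multiset_prod_comp, Multiset.map_map, Multiset.map_map]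
    refine congrArg _ (Multiset.map_congr rfl (fun x _ => ?_))
    simp only [Function.comp_apply, Polynomial.add_comp, Polynomial.X_comp,
      Polynomial.C_comp]
    rw [Polynomial.C_add]
    ring
  have hv := Multiset.prod_X_add_C_coeff (s.map (fun x => x + c))
      (k := Multiset.card s - j) (by rw [Multiset.card_map]; omega)
  rw [Multiset.card_map, show Multiset.card s - (Multiset.card s - j) = j by omega] at hv
  rw [← hv, hcomp, ← Polynomial.taylor_apply, Polynomial.taylor_coeff]

lemma hasse_deriv_succ (f : ℝ[X]) (k : ℕ) :
    derivative (Polynomial.hasseDeriv k f) = (k+1) • Polynomial.hasseDeriv (k+1) f := by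
  have h := Polynomial.hasseDeriv_comp (R := ℝ) 1 k
  have h2 := congrFun (congrArg DFunLike.coe h) f
  simp only [LinearMap.comp_apply, Polynomial.hasseDeriv_one'] at h2
  rw [h2, LinearMap.smul_apply, Nat.choose_one_right, add_comm 1 k]

lemma shift_hasDerivAt (s : Multiset ℝ) (j : ℕ) (hj1 : 1 ≤ j) (hj : j ≤ Multiset.card s)
    (c : ℝ) :
    HasDerivAt (fun c => (s.map (fun x => x + c)).esymm j)
      (((Multiset.card s - j + 1 : ℕ) : ℝ) * (s.map (fun x => x + c)).esymm (j-1)) c := by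
  rw [funext (shift_eval s j hj)]
  have hd := Polynomial.hasDerivAt (Polynomial.hasseDeriv (Multiset.card s - j) (pgen s)) c
  rw [hasse_deriv_succ] at hd
  refine hd.congr_deriv ?_
  rw [shift_eval s (j-1) (by omega) c, show Multiset.card s - (j-1)
    = Multiset.card s - j + 1 by omega]
  simp [nsmul_eq_mul]

lemma map_add_zero (s : Multiset ℝ) : s.map (fun x => x + 0) = s := by
  have : (fun (x:ℝ) => x + 0) = id := funext fun x => add_zero x
  rw [this, Multiset.map_id]

lemma claimA (s : Multiset ℝ) (m : ℕ) (hms : m ≤ Multiset.card s)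
    (hcone : ∀ j, 1 ≤ j → j ≤ m → 0 < s.esymm j) :
    ∀ j, 1 ≤ j → j ≤ m → ∀ c, 0 ≤ c → 0 < (s.map (fun x => x + c)).esymm j := by
  intro j
  induction j using Nat.strong_induction_on with
  | _ j IH =>
  intro hj1 hjm c hc
  have hjs : j ≤ Multiset.card s := le_trans hjm hms
  have hmono : MonotoneOn (fun c => (s.map (fun x => x + c)).esymm j) (Set.Ici 0) := by
    apply monotoneOn_of_deriv_nonneg (convex_Ici 0)
    · rw [funext (shift_eval s j hjs)]
      exact (Polynomial.continuous _).continuousOn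
    · intro x hx
      exact ((shift_hasDerivAt s j hj1 hjs x).differentiableAt).differentiableWithinAt
    · intro x hx
      rw [(shift_hasDerivAt s j hj1 hjs x).deriv]
      have hx0 : (0:ℝ) ≤ x := le_of_lt (by simpa [interior_Ici] using hx)
      rcases eq_or_lt_of_le hj1 with h1 | h2
      · rw [show j - 1 = 0 by omega, mesymm_zero, mul_one]
        positivity
      · have hpos := IH (j-1) (by omega) (by omega) (by omega) x hx0
        positivity
  have h2 := hmono (Set.mem_Ici.2 (le_refl (0:ℝ))) (Set.mem_Ici.2 hc) hc
  dsimp only at h2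
  rw [map_add_zero] at h2
  exact lt_of_lt_of_le (hcone j hj1 hjm) h2

lemma claimB (t : Multiset ℝ) (ai : ℝ) (m : ℕ) (hm : 2 ≤ m)
    (hct : Multiset.card t + 1 = 2*m)
    (hcone : ∀ j, 1 ≤ j → j ≤ m → 0 < (ai ::ₘ t).esymm j) :
    ∀ j, 1 ≤ j → j ≤ m - 1 → ∀ c, 0 ≤ c → 0 < (t.map (fun x => x + c)).esymm j := by
  intro j
  induction j using Nat.strong_induction_on with
  | _ j IH =>
  intro hj1 hjm c hc
  obtain ⟨q, rfl⟩ : ∃ q, j = q + 1 := ⟨j - 1, by omega⟩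
  by_contra hcon
  push_neg at hcon
  have hcardfull : Multiset.card (ai ::ₘ t) = 2*m := by rw [Multiset.card_cons]; omega
  have hA := claimA (ai ::ₘ t) m (by omega) hcone
  have hqct : q + 1 ≤ Multiset.card t := by omega
  -- tendsto atTop for the shifted esymm of t
  set D := Polynomial.hasseDeriv (Multiset.card t - (q+1)) (pgen t) with hD
  have hDcoeff : D.coeff (q+1) = ((Multiset.card t).choose (Multiset.card t - (q+1)) : ℝ) := by
    rw [hD, Polynomial.hasseDeriv_coeff, show q + 1 + (Multiset.card t - (q+1))
      = Multiset.card t by omega, ← pgen_natDegree t, (pgen_monic t).coeff_natDegree,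
      mul_one, pgen_natDegree]
  have hDcpos : (0:ℝ) < D.coeff (q+1) := by
    rw [hDcoeff]
    exact_mod_cast Nat.choose_pos (by omega)
  have hDdegle : D.natDegree ≤ q + 1 := by
    have h' := Polynomial.natDegree_hasseDeriv_le (pgen t) (Multiset.card t - (q+1))
    rw [pgen_natDegree, ← hD] at h'
    omega
  have hDdeg : D.natDegree = q + 1 :=
    le_antisymm hDdegle (Polynomial.le_natDegree_of_ne_zero (ne_of_gt hDcpos))
  have hDdegpos : 0 < D.degree := Polynomial.natDegree_pos_iff_degree_pos.mp (by omega)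
  have hlead : (0:ℝ) ≤ D.leadingCoeff := by
    rw [Polynomial.leadingCoeff, hDdeg]; exact le_of_lt hDcpos
  have htend := Polynomial.tendsto_atTop_of_leadingCoeff_nonneg D hDdegpos hlead
  obtain ⟨c1, hc1pos, hcc1⟩ :=
    ((htend.eventually (Filter.eventually_gt_atTop (0:ℝ))).and
      (Filter.eventually_ge_atTop c)).exists
  -- IVT
  have hfeq : ∀ x : ℝ, (t.map (fun y => y + x)).esymm (q+1) = D.eval x :=
    fun x => shift_eval t (q+1) hqct x
  have hcont : ContinuousOn (fun x => D.eval x) (Set.Icc c c1) :=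
    (Polynomial.continuous D).continuousOn
  have hmem : (0:ℝ) ∈ Set.Icc (D.eval c) (D.eval c1) := by
    constructor
    · rw [← hfeq c]; exact hcon
    · exact le_of_lt hc1pos
  obtain ⟨cs, hcsmem, hcs0⟩ := intermediate_value_Icc hcc1 hcont hmem
  have hcs_nonneg : 0 ≤ cs := le_trans hc hcsmem.1
  have hzero : (t.map (fun y => y + cs)).esymm (q+1) = 0 := by rw [hfeq cs]; exact hcs0
  -- recursion gives positivity of level q+2 of t at cs
  have hfull := hA (q+2) (by omega) (by omega) cs hcs_nonneg
  rw [Multiset.map_cons, mesymm_cons, hzero, mul_zero, zero_add] at hfull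
  -- level q of t at cs
  have hqpos : 0 < (t.map (fun y => y + cs)).esymm q := by
    rcases Nat.eq_zero_or_pos q with rfl | hq1
    · rw [mesymm_zero]; norm_num
    · exact IH q (by omega) hq1 (by omega) cs hcs_nonneg
  -- Newton gives contradiction
  have hnewt := newton (Multiset.card t) (t.map (fun y => y + cs))
    (by rw [Multiset.card_map]) q (by omega)
  rw [hzero] at hnewt
  have hC0 : (0:ℝ) < ((Multiset.card t).choose q : ℝ) := by
    exact_mod_cast Nat.choose_pos (by omega)
  have hC2 : (0:ℝ) < ((Multiset.card t).choose (q+2) : ℝ) := by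
    exact_mod_cast Nat.choose_pos (by omega)
  have hlhs : 0 < (t.map (fun y => y + cs)).esymm q / ((Multiset.card t).choose q : ℝ)
      * ((t.map (fun y => y + cs)).esymm (q+2) / ((Multiset.card t).choose (q+2) : ℝ)) := by
    apply mul_pos (div_pos hqpos hC0) (div_pos hfull hC2)
  rw [zero_div] at hnewt
  simp only [zero_pow, ne_eq, OfNat.ofNat_ne_zero, not_false_eq_true] at hnewt
  linarith


/-- Maclaurin chain: σ₁ σ_{m-1} ≥ (2m-1) σ_m for a (2m-1)-element multiset positive in Γ. -/
lemma chain (t : Multiset ℝ) (m : ℕ) (hm : 2 ≤ m) (hct : Multiset.card t = 2*m - 1)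
    (hpos : ∀ j, j ≤ m - 1 → 0 < t.esymm j) :
    (2*(m:ℝ) - 1) * t.esymm m ≤ t.esymm 1 * t.esymm (m-1) := by
  have hNcast : ((Multiset.card t : ℕ) : ℝ) = 2*(m:ℝ) - 1 := by
    rw [hct]; push_cast [Nat.cast_sub (by omega : 1 ≤ 2*m)]; ring
  rcases le_or_gt (t.esymm m) 0 with hem | hem
  · have h1 := hpos 1 (by omega)
    have h2 := hpos (m-1) le_rfl
    nlinarith
  · have hppos : ∀ r, r ≤ m → 0 < t.esymm r / ((Multiset.card t).choose r : ℝ) := by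
      intro r hr
      have hC : (0:ℝ) < ((Multiset.card t).choose r : ℝ) := by
        exact_mod_cast Nat.choose_pos (by omega)
      rcases eq_or_lt_of_le hr with rfl | hlt
      · exact div_pos hem hC
      · exact div_pos (hpos r (by omega)) hC
    have hchain : ∀ r, 1 ≤ r → r ≤ m →
        t.esymm r / ((Multiset.card t).choose r : ℝ)
          ≤ t.esymm 1 / ((Multiset.card t).choose 1 : ℝ)
            * (t.esymm (r-1) / ((Multiset.card t).choose (r-1) : ℝ)) := by
      intro r
      induction r using Nat.strong_induction_on with
      | _ r IH =>
      intro hr1 hrm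
      rcases r with _ | q
      · omega
      rcases q with _ | w
      · -- r = 1
        norm_num [mesymm_zero]
      · -- r = w + 2
        have hIH := IH (w+1) (by omega) (by omega) (by omega)
        rw [show w + 1 - 1 = w by omega] at hIH
        have hnewt := newton (Multiset.card t) t rfl w (by omega)
        have hpw := hppos w (by omega)
        have hpw1 := hppos (w+1) (by omega)
        have hpw2 := hppos (w+2) (by omega)
        have hp1 := hppos 1 (by omega)
        rw [show w + 2 - 1 = w + 1 by omega]
        set pw := t.esymm w / ((Multiset.card t).choose w : ℝ)
        set pw1 := t.esymm (w+1) / ((Multiset.card t).choose (w+1) : ℝ)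
        set pw2 := t.esymm (w+2) / ((Multiset.card t).choose (w+2) : ℝ)
        set p1 := t.esymm 1 / ((Multiset.card t).choose 1 : ℝ)
        have key : 0 ≤ pw * (p1 * pw1 - pw2) := by
          nlinarith [hnewt, mul_nonneg hpw1.le (sub_nonneg.2 hIH)]
        by_contra hcon
        push_neg at hcon
        nlinarith [key, mul_pos hpw (sub_pos.2 hcon)]
    have hfin := hchain m (by omega) le_rfl
    have hCsymm : (Multiset.card t).choose (m-1) = (Multiset.card t).choose m := by
      rw [show m - 1 = Multiset.card t - m by omega, Nat.choose_symm (by omega)]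
    have hC1 : ((Multiset.card t).choose 1 : ℝ) = 2*(m:ℝ) - 1 := by
      rw [Nat.choose_one_right, hNcast]
    have hCm : (0:ℝ) < ((Multiset.card t).choose m : ℝ) := by
      exact_mod_cast Nat.choose_pos (by omega)
    have hm2R : (0:ℝ) < 2*(m:ℝ) - 1 := by
      have : (2:ℝ) ≤ (m:ℝ) := by exact_mod_cast hm
      linarith
    rw [hCsymm, hC1, div_mul_div_comm, div_le_div_iff₀ hCm (mul_pos hm2R hCm)] at hfin
    by_contra hcon
    push_neg at hcon
    nlinarith [hfin, mul_pos hCm (sub_pos.2 hcon)]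


end MyNI

open MyNI

/-- Matrix form of the eigenvalue inequality: for a symmetric positive-definite matrix `A`
orthogonally diagonalized as `A = U D(λ) Uᵀ` with Schouten eigenvalues `a ∈ Γ_m⁺`,
the matrix inequality `(n-1)·A⁻¹ ≤ (1/σ_m(a))·T_{m-1}(a)` holds, where `T_{m-1}(a)` is
diagonal in the eigenbasis with entries `σ_{m-1;i}(a)`. -/
theorem matrix_inequality {m : ℕ} (hm : 2 ≤ m) (n : ℕ) (hn : n = 2 * m)
    (A U : Matrix (Fin n) (Fin n) ℝ) (lam : Fin n → ℝ)
    (hU : U * U.transpose = 1)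
    (hA : A = U * Matrix.diagonal lam * U.transpose)
    (hApos : A.PosDef) (hAsymm : A.IsSymm)
    (hlam : ∀ i, 0 < lam i)
    (a : Fin n → ℝ)
    (ha : ∀ i, a i = (1 / ((n : ℝ) - 2)) * (lam i - esymm 1 lam / (2 * ((n : ℝ) - 1))))
    (hcone : ∀ j, 1 ≤ j → j ≤ m → 0 < esymm j a) :
    ((1 / esymm m a) •
        (U * Matrix.diagonal (fun i => esymmAt (m - 1) i a) * U.transpose)
      - ((n : ℝ) - 1) • A⁻¹).PosSemidef := by
  have hn4 : 4 ≤ n := by omega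
  have hnR : (4:ℝ) ≤ (n:ℝ) := by exact_mod_cast hn4
  have hn2 : ((n:ℝ) - 2) ≠ 0 := by linarith
  have hn1 : ((n:ℝ) - 1) ≠ 0 := by linarith
  -- bridge between Fin esymm and multiset esymm
  have hbridge : ∀ (k : ℕ) (x : Fin n → ℝ),
      esymm k x = ((Finset.univ.val.map x)).esymm k :=
    fun k x => (Finset.esymm_map_val x Finset.univ k).symm
  -- sum facts
  have hsum : ∀ (x : Fin n → ℝ), esymm 1 x = ∑ i, x i := by
    intro x
    rw [hbridge 1 x, mesymm_one]
    rfl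
  -- sum of a
  have hsuma : esymm 1 a = esymm 1 lam / (2 * ((n:ℝ) - 1)) := by
    rw [hsum a]
    have : ∀ i, a i = (1 / ((n : ℝ) - 2)) * (lam i - esymm 1 lam / (2 * ((n : ℝ) - 1))) := ha
    rw [Finset.sum_congr rfl (fun i _ => this i)]
    rw [← Finset.mul_sum, Finset.sum_sub_distrib, Finset.sum_const, Finset.card_univ,
      Fintype.card_fin, ← hsum lam]
    simp only [nsmul_eq_mul]
    field_simp
    ring
  have hlam_eq : ∀ i, lam i = ((n:ℝ) - 2) * a i + esymm 1 a := by
    intro i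
    rw [hsuma, ha i]
    field_simp
    ring
  -- scalar inequality
  have hscalar : ∀ i, ((n:ℝ) - 1) * esymm m a ≤ lam i * esymmAt (m - 1) i a := by
    intro i
    -- the deleted multiset
    set t₀ : Multiset ℝ := (Finset.univ.erase i).val.map a with ht₀
    have huniv : (Finset.univ : Finset (Fin n)).val = i ::ₘ (Finset.univ.erase i).val := by
      rw [Finset.erase_val,
        Multiset.cons_erase (Finset.mem_val.mpr (Finset.mem_univ i))]
    have hsplit : Finset.univ.val.map a = a i ::ₘ t₀ := by
      rw [huniv, Multiset.map_cons]
    have hsplit0 : Finset.univ.val.map (Function.update a i 0) = (0:ℝ) ::ₘ t₀ := by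
      rw [huniv, Multiset.map_cons, Function.update_self]
      congr 1
      refine Multiset.map_congr rfl (fun j hj => ?_)
      have hji : j ≠ i := by
        intro h
        subst h
        have hnd := (Finset.univ : Finset (Fin n)).nodup
        exact (Multiset.Nodup.notMem_erase hnd) (by rw [← Finset.erase_val]; exact hj)
      rw [Function.update_of_ne hji]
    have hcardt : Multiset.card t₀ + 1 = 2*m := by
      have hce : (Finset.univ.erase i).card = n - 1 := by
        rw [Finset.card_erase_of_mem (Finset.mem_univ i), Finset.card_univ, Fintype.card_fin]
      have : Multiset.card t₀ = n - 1 := by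
        rw [ht₀, Multiset.card_map, ← Finset.card_def, hce]
      omega
    have hconeM : ∀ j, 1 ≤ j → j ≤ m → 0 < (a i ::ₘ t₀).esymm j := by
      intro j h1 h2
      rw [← hsplit, ← hbridge]
      exact hcone j h1 h2
    have htpos : ∀ j, j ≤ m - 1 → 0 < t₀.esymm j := by
      intro j hj
      rcases Nat.eq_zero_or_pos j with rfl | h1
      · rw [mesymm_zero]; norm_num
      · have hb := claimB t₀ (a i) m hm hcardt hconeM j h1 hj 0 le_rfl
        rwa [map_add_zero] at hb
    have hch := chain t₀ m hm (by omega) htpos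
    obtain ⟨k, hk⟩ : ∃ k, m = k + 2 := ⟨m - 2, by omega⟩
    have hm1 : m - 1 = k + 1 := by omega
    have hfull : esymm m a = a i * t₀.esymm (m-1) + t₀.esymm m := by
      rw [hbridge m a, hsplit, hm1, hk]
      exact mesymm_cons _ _ _
    have hAt : esymmAt (m-1) i a = t₀.esymm (m-1) := by
      rw [esymmAt, hbridge, hsplit0, hm1, mesymm_cons, zero_mul, zero_add]
    have he1 : esymm 1 a = a i + t₀.esymm 1 := by
      have hc := mesymm_cons (a i) t₀ 0
      rw [zero_add, mesymm_zero, mul_one] at hc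
      rw [hbridge 1 a, hsplit]
      exact hc
    have hcast : (n:ℝ) = 2*(m:ℝ) := by rw [hn]; push_cast; ring
    rw [hfull, hAt, hlam_eq i, he1, hcast]
    nlinarith [hch]
  -- matrix part
  have hσm : 0 < esymm m a := hcone m (by omega) le_rfl
  have hd : ∀ i, 0 ≤ (1 / esymm m a) * esymmAt (m-1) i a - ((n:ℝ)-1) * (lam i)⁻¹ := by
    intro i
    have h := hscalar i
    have hli := hlam i
    rw [sub_nonneg, show ((n:ℝ)-1) * (lam i)⁻¹ = ((n:ℝ)-1)/(lam i) by rw [div_eq_mul_inv],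
      show (1/esymm m a) * esymmAt (m-1) i a = esymmAt (m-1) i a / esymm m a by ring,
      div_le_div_iff₀ hli hσm]
    nlinarith [h]
  have hUU : U.transpose * U = 1 := mul_eq_one_comm.mp hU
  have hAinv : A⁻¹ = U * Matrix.diagonal (fun i => (lam i)⁻¹) * U.transpose := by
    apply Matrix.inv_eq_right_inv
    rw [hA]
    have hdd : Matrix.diagonal lam * Matrix.diagonal (fun i => (lam i)⁻¹)
        = (1 : Matrix (Fin n) (Fin n) ℝ) := by
      have hone : (fun i => lam i * (lam i)⁻¹) = fun _ : Fin n => (1:ℝ) :=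
        funext fun j => mul_inv_cancel₀ (ne_of_gt (hlam j))
      rw [Matrix.diagonal_mul_diagonal, hone, Matrix.diagonal_one]
    calc U * Matrix.diagonal lam * U.transpose
          * (U * Matrix.diagonal (fun i => (lam i)⁻¹) * U.transpose)
        = U * (Matrix.diagonal lam * ((U.transpose * U)
            * (Matrix.diagonal (fun i => (lam i)⁻¹) * U.transpose))) := by
          simp only [Matrix.mul_assoc]
      _ = U * ((Matrix.diagonal lam * Matrix.diagonal (fun i => (lam i)⁻¹)) * U.transpose) := by
          rw [hUU, Matrix.one_mul, Matrix.mul_assoc]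
      _ = U * U.transpose := by rw [hdd, Matrix.one_mul]
      _ = 1 := hU
  rw [hAinv]
  have hsmul : ∀ (c : ℝ) (D : Matrix (Fin n) (Fin n) ℝ),
      c • (U * D * U.transpose) = U * (c • D) * U.transpose := by
    intro c D
    rw [Matrix.mul_smul, Matrix.smul_mul]
  have hDD : (1 / esymm m a) • Matrix.diagonal (fun i => esymmAt (m - 1) i a)
      - ((n:ℝ) - 1) • Matrix.diagonal (fun i => (lam i)⁻¹)
      = Matrix.diagonal (fun i =>
          (1 / esymm m a) * esymmAt (m-1) i a - ((n:ℝ)-1) * (lam i)⁻¹) := by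
    ext j l
    rcases eq_or_ne j l with rfl | hne
    · simp [Matrix.diagonal_apply_eq, Matrix.sub_apply, Matrix.smul_apply, smul_eq_mul]
    · simp [Matrix.diagonal_apply_ne _ hne, Matrix.sub_apply, Matrix.smul_apply]
  rw [hsmul, hsmul, ← Matrix.sub_mul, ← Matrix.mul_sub, hDD]
  have hdiag := Matrix.posSemidef_diagonal_iff.mpr hd
  have hres := hdiag.mul_mul_conjTranspose_same U
  rwa [Matrix.conjTranspose_eq_transpose_of_trivial] at hres
end

section
/- Suppose λ ∈ ℝⁿ with n = 2m and the associated a_i = (1/(n−2))(λ_i − σ₁(λ)/(2(n−1))) satisfy σ_j(a) > 0 for 1 ≤ j ≤ m. Then every λ_i > 0 (the 'Ricci eigenvalues' are positive). -/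
open Finset Polynomial

namespace GV


lemma mesymm_zero (s : Multiset ℝ) : s.esymm 0 = 1 := by
  simp [Multiset.esymm, Multiset.powersetCard_zero_left]

lemma mesymm_cons (a : ℝ) (s : Multiset ℝ) (n : ℕ) :
    (a ::ₘ s).esymm (n + 1) = s.esymm (n + 1) + a * s.esymm n := by
  rw [Multiset.esymm, Multiset.powersetCard_cons, Multiset.map_add, Multiset.sum_add,
    Multiset.map_map]
  congr 1
  rw [show ((Multiset.powersetCard n s).map (Multiset.prod ∘ Multiset.cons a))
        = (Multiset.powersetCard n s).map (fun t => a * t.prod) by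
    apply Multiset.map_congr rfl; intro t _; simp [Multiset.prod_cons]]
  rw [Multiset.sum_map_mul_left]
  rfl

lemma mesymm_one (s : Multiset ℝ) : s.esymm 1 = s.sum := by
  induction s using Multiset.induction_on with
  | empty => simp [Multiset.esymm, Multiset.powersetCard_one]
  | cons a s ih => rw [mesymm_cons, ih, mesymm_zero]; simp; ring



noncomputable def pOf (s : Multiset ℝ) : ℝ[X] := (s.map fun r => X + C r).prod

lemma pOf_monic (s : Multiset ℝ) : (pOf s).Monic := by
  apply monic_multiset_prod_of_monic
  intro r _; exact monic_X_add_C r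

lemma pOf_natDegree (s : Multiset ℝ) : (pOf s).natDegree = Multiset.card s := by
  rw [pOf, natDegree_multiset_prod_of_monic _ (fun f hf => by
    obtain ⟨r, _, rfl⟩ := Multiset.mem_map.1 hf; exact monic_X_add_C r)]
  rw [Multiset.map_map]
  simp [Function.comp, natDegree_X_add_C]

lemma pOf_coeff (s : Multiset ℝ) {k : ℕ} (h : k ≤ Multiset.card s) :
    (pOf s).coeff k = s.esymm (Multiset.card s - k) :=
  Multiset.prod_X_add_C_coeff s h

lemma pOf_splits (s : Multiset ℝ) : (pOf s).Splits := by
  induction s using Multiset.induction_on with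
  | empty => simpa [pOf] using Splits.one
  | cons a s ih =>
    rw [pOf, Multiset.map_cons, Multiset.prod_cons]
    exact Splits.mul (Splits.of_natDegree_le_one (by simp [natDegree_X_add_C])) ih

lemma splits_derivative {p : ℝ[X]} (hp : p.Splits) :
    (derivative p).Splits := by
  by_cases h0 : p.natDegree = 0
  · obtain ⟨c, rfl⟩ := natDegree_eq_zero.1 h0
    simpa using Splits.zero
  · have hcard : Multiset.card p.roots = p.natDegree := splits_iff_card_roots.1 hp
    have h1 := p.card_roots_le_derivative
    have h2 := natDegree_derivative_le p
    have h3 := (derivative p).card_roots'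
    rw [splits_iff_card_roots]
    omega

lemma splits_iterate_derivative {p : ℝ[X]} (hp : p.Splits) (k : ℕ) :
    (derivative^[k] p).Splits := by
  induction k with
  | zero => exact hp
  | succ k ih => rw [Function.iterate_succ_apply']; exact splits_derivative ih

lemma natDegree_iterate_derivative_le (p : ℝ[X]) (k : ℕ) :
    (derivative^[k] p).natDegree ≤ p.natDegree - k := by
  induction k with
  | zero => simp
  | succ k ih =>
    rw [Function.iterate_succ_apply']
    calc (derivative (derivative^[k] p)).natDegree ≤ (derivative^[k] p).natDegree - 1 :=
          natDegree_derivative_le _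
    _ ≤ p.natDegree - k - 1 := by omega
    _ = p.natDegree - (k+1) := by omega

lemma splits_reverse {p : ℝ[X]} (hp : p.Splits) :
    p.reverse.Splits := by
  rcases eq_or_ne p 0 with rfl | h0
  · simpa using Splits.zero
  · have heq := Splits.eq_prod_roots hp
    rw [heq, reverse_mul_of_domain]
    apply Splits.mul
    · exact Splits.of_natDegree_le_one ((reverse_natDegree_le _).trans (by simp))
    · generalize p.roots = t
      induction t using Multiset.induction_on with
      | empty =>
        rw [Multiset.map_zero, Multiset.prod_zero, show ((1:ℝ[X]).reverse) = 1 by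
          simpa using reverse_C (1:ℝ)]
        exact Splits.one
      | cons a t ih =>
        rw [Multiset.map_cons, Multiset.prod_cons, reverse_mul_of_domain]
        exact Splits.mul
          (Splits.of_natDegree_le_one ((reverse_natDegree_le _).trans (by simp))) ih

lemma quad_disc {q : ℝ[X]} (hq : q.Splits) (hdeg : q.natDegree ≤ 2) :
    4 * (q.coeff 2 * q.coeff 0) ≤ (q.coeff 1) ^ 2 := by
  rcases eq_or_ne (q.coeff 2) 0 with h2 | h2
  · rw [h2]; nlinarith [sq_nonneg (q.coeff 1)]
  · have hdeg2 : q.natDegree = 2 := le_antisymm hdeg (le_natDegree_of_ne_zero h2)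
    have hcard : Multiset.card q.roots = 2 := by
      rw [splits_iff_card_roots.1 hq, hdeg2]
    obtain ⟨x, y, hxy⟩ := Multiset.card_eq_two.1 hcard
    have heq := Splits.eq_prod_roots hq
    rw [hxy] at heq
    have hlc : q.leadingCoeff = q.coeff 2 := by rw [leadingCoeff, hdeg2]
    have hprod : (Multiset.map (fun a => X - C a) ({x, y} : Multiset ℝ)).prod
        = (X - C x) * (X - C y) := by
      rw [show ({x, y} : Multiset ℝ) = x ::ₘ {y} from rfl]
      rw [Multiset.map_cons, Multiset.map_singleton, Multiset.prod_cons, Multiset.prod_singleton]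
    have hq' : q = C (q.coeff 2) * ((X - C x) * (X - C y)) := by
      conv_lhs => rw [heq]
      rw [hlc, hprod]
    have hq'' : q = C (q.coeff 2) * X ^ 2 - C (q.coeff 2 * (x + y)) * X
        + C (q.coeff 2 * (x * y)) := by
      conv_lhs => rw [hq']
      simp only [map_mul, map_add]; ring
    have e0 : q.coeff 0 = q.coeff 2 * (x * y) := by
      conv_lhs => rw [hq'']
      simp
    have e1 : q.coeff 1 = -(q.coeff 2 * (x + y)) := by
      conv_lhs => rw [hq'']
      simp
    rw [e0, e1]
    nlinarith [sq_nonneg (q.coeff 2 * (x - y))]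



-- nat descFactorial identities
lemma dF1 (j : ℕ) : (1 + j).descFactorial j = (j + 1) * j.descFactorial j := by
  induction j with
  | zero => simp
  | succ j ih =>
    have h1 : (1 + (j+1)) = (1 + j) + 1 := by omega
    rw [h1, Nat.succ_descFactorial_succ, ih, Nat.succ_descFactorial_succ]
    ring

lemma dF2 (j : ℕ) : 2 * ((2 + j).descFactorial j) = (j + 2) * ((1 + j).descFactorial j) := by
  induction j with
  | zero => simp
  | succ j ih =>
    have h1 : (2 + (j+1)) = (2 + j) + 1 := by omega
    rw [h1, Nat.succ_descFactorial_succ, show (1 + (j+1)) = (1+j)+1 by omega,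
      Nat.succ_descFactorial_succ]
    calc 2 * ((2 + j + 1) * (2 + j).descFactorial j)
        = (2 + j + 1) * (2 * (2 + j).descFactorial j) := by ring
    _ = (2 + j + 1) * ((j + 2) * (1 + j).descFactorial j) := by rw [ih]
    _ = (j + 1 + 2) * ((1 + j + 1) * (1 + j).descFactorial j) := by ring

lemma dF_pos (a b : ℕ) : 0 < (a + b).descFactorial b :=
  Nat.pos_of_ne_zero (fun h => by
    have := Nat.descFactorial_eq_zero_iff_lt.1 h; omega)


/-- Newton's inequality for arbitrary real multisets. -/
theorem newton (s : Multiset ℝ) (j l : ℕ) (hcard : Multiset.card s = j + 2 + l) :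
    ((j : ℝ) + 2) * ((l : ℝ) + 2) * (s.esymm j * s.esymm (j + 2))
      ≤ ((j : ℝ) + 1) * ((l : ℝ) + 1) * (s.esymm (j + 1)) ^ 2 := by
  set N := j + 2 + l with hN
  have hdegP : (pOf s).natDegree = N := by rw [pOf_natDegree, hcard]
  set Q1 := derivative^[l] (pOf s) with hQ1
  have hc1 : ∀ i : ℕ, Q1.coeff i = ((i + l).descFactorial l : ℝ) * (pOf s).coeff (i + l) := by
    intro i
    rw [hQ1, Polynomial.coeff_iterate_derivative, nsmul_eq_mul]
  have hdeg1le : Q1.natDegree ≤ j + 2 := by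
    have h := natDegree_iterate_derivative_le (pOf s) l
    rw [← hQ1, hdegP] at h
    omega
  have hlead1 : Q1.coeff (j + 2) ≠ 0 := by
    rw [hc1, show j + 2 + l = N from rfl, show (pOf s).coeff N = 1 by
      have := (pOf_monic s).coeff_natDegree; rwa [hdegP] at this]
    have := dF_pos (j + 2) l
    positivity
  have hdeg1 : Q1.natDegree = j + 2 := le_antisymm hdeg1le (le_natDegree_of_ne_zero hlead1)
  set Q2 := Q1.reverse with hQ2
  have hc2 : ∀ i : ℕ, i ≤ j + 2 → Q2.coeff i = Q1.coeff (j + 2 - i) := by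
    intro i hi
    rw [hQ2, Polynomial.coeff_reverse, hdeg1, Polynomial.revAt_le hi]
  have hdeg2le : Q2.natDegree ≤ j + 2 := by
    rw [hQ2]; exact (Polynomial.reverse_natDegree_le _).trans (le_of_eq hdeg1)
  set Q := derivative^[j] Q2 with hQdef
  have hsplitsQ : Q.Splits :=
    splits_iterate_derivative (splits_reverse (splits_iterate_derivative (pOf_splits s) l)) j
  have hdegQ : Q.natDegree ≤ 2 := by
    have h := natDegree_iterate_derivative_le Q2 j
    rw [← hQdef] at h
    omega
  have hcQ : ∀ t : ℕ, Q.coeff t = ((t + j).descFactorial j : ℝ) * Q2.coeff (t + j) := by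
    intro t
    rw [hQdef, Polynomial.coeff_iterate_derivative, nsmul_eq_mul]
  -- the three coefficients
  have hq0 : Q.coeff 0 = ((0 + j).descFactorial j : ℝ) * (((2 + l).descFactorial l : ℝ))
      * s.esymm j := by
    rw [hcQ, hc2 (0 + j) (by omega), show j + 2 - (0 + j) = 2 by omega, hc1,
      pOf_coeff s (by omega : 2 + l ≤ Multiset.card s), hcard,
      show j + 2 + l - (2 + l) = j by omega]
    ring
  have hq1 : Q.coeff 1 = ((1 + j).descFactorial j : ℝ) * (((1 + l).descFactorial l : ℝ))
      * s.esymm (j + 1) := by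
    rw [hcQ, hc2 (1 + j) (by omega), show j + 2 - (1 + j) = 1 by omega, hc1,
      pOf_coeff s (by omega : 1 + l ≤ Multiset.card s), hcard,
      show j + 2 + l - (1 + l) = j + 1 by omega]
    ring
  have hq2 : Q.coeff 2 = ((2 + j).descFactorial j : ℝ) * (((0 + l).descFactorial l : ℝ))
      * s.esymm (j + 2) := by
    rw [hcQ, hc2 (2 + j) (by omega), show j + 2 - (2 + j) = 0 by omega, hc1,
      pOf_coeff s (by omega : 0 + l ≤ Multiset.card s), hcard,
      show j + 2 + l - (0 + l) = j + 2 by omega]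
    ring
  have hq := quad_disc hsplitsQ hdegQ
  rw [hq0, hq1, hq2] at hq
  -- notation for the descFactorial constants as reals
  set f0 : ℝ := ((0 + j).descFactorial j : ℝ) with hf0
  set f1 : ℝ := ((1 + j).descFactorial j : ℝ) with hf1
  set f2 : ℝ := ((2 + j).descFactorial j : ℝ) with hf2
  set g0 : ℝ := ((0 + l).descFactorial l : ℝ) with hg0
  set g1 : ℝ := ((1 + l).descFactorial l : ℝ) with hg1
  set g2 : ℝ := ((2 + l).descFactorial l : ℝ) with hg2
  have hf0pos : (0:ℝ) < f0 := by rw [hf0]; exact_mod_cast dF_pos 0 j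
  have hg0pos : (0:ℝ) < g0 := by rw [hg0]; exact_mod_cast dF_pos 0 l
  have hf1eq : f1 = ((j:ℝ) + 1) * f0 := by
    rw [hf1, hf0, dF1]; push_cast; ring
  have hg1eq : g1 = ((l:ℝ) + 1) * g0 := by
    rw [hg1, hg0, dF1]; push_cast; ring
  have hf2eq : 2 * f2 = ((j:ℝ) + 2) * f1 := by
    rw [hf2, hf1]; exact_mod_cast dF2 j
  have hg2eq : 2 * g2 = ((l:ℝ) + 2) * g1 := by
    rw [hg2, hg1]; exact_mod_cast dF2 l
  have hf2' : f2 = ((j:ℝ) + 2) * (((j:ℝ) + 1) * f0) / 2 := by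
    have h2 : 2 * f2 = ((j:ℝ) + 2) * (((j:ℝ) + 1) * f0) := by rw [← hf1eq]; exact hf2eq
    linarith
  have hg2' : g2 = ((l:ℝ) + 2) * (((l:ℝ) + 1) * g0) / 2 := by
    have h2 : 2 * g2 = ((l:ℝ) + 2) * (((l:ℝ) + 1) * g0) := by rw [← hg1eq]; exact hg2eq
    linarith
  set M : ℝ := ((j:ℝ) + 1) * ((l:ℝ) + 1) * (f0 * g0) ^ 2 with hM
  have hMpos : 0 < M := by rw [hM]; positivity
  have e_lhs : 4 * (f2 * g0 * s.esymm (j+2) * (f0 * g2 * s.esymm j))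
      = M * (((j : ℝ) + 2) * ((l : ℝ) + 2) * (s.esymm j * s.esymm (j + 2))) := by
    rw [hf2', hg2', hM]; ring
  have e_rhs : (f1 * g1 * s.esymm (j+1)) ^ 2
      = M * (((j : ℝ) + 1) * ((l : ℝ) + 1) * (s.esymm (j + 1)) ^ 2) := by
    rw [hf1eq, hg1eq, hM]; ring
  have hMle : M * (((j : ℝ) + 2) * ((l : ℝ) + 2) * (s.esymm j * s.esymm (j + 2)))
      ≤ M * (((j : ℝ) + 1) * ((l : ℝ) + 1) * (s.esymm (j + 1)) ^ 2) := by
    nlinarith [hq, e_lhs, e_rhs]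
  exact le_of_mul_le_mul_left hMle hMpos


/-- Maclaurin-type chain inequality on the cone. -/
theorem chain (s : Multiset ℝ) (m : ℕ) (hm : 2 ≤ m) (hcard : Multiset.card s = 2 * m - 1)
    (hpos : ∀ j, j ≤ m → 0 < s.esymm j) :
    ((2 * m - 1 : ℕ) : ℝ) * s.esymm m ≤ s.esymm 1 * s.esymm (m - 1) := by
  set N : ℕ := 2 * m - 1 with hNdef
  have hNm : m + 1 ≤ N := by omega
  -- the inductive claim
  have claim : ∀ k, 1 ≤ k → k < m →
      (N : ℝ) * ((k : ℝ) + 1) * s.esymm (k + 1) ≤ ((N : ℝ) - k) * (s.esymm 1 * s.esymm k) := by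
    intro k hk1
    induction k with
    | zero => omega
    | succ k ih =>
      intro hkm
      rcases Nat.eq_or_lt_of_le hk1 with h1 | hlt
      · -- base case k+1 = 1, i.e. k = 0
        have hk0 : k = 0 := by omega
        subst hk0
        have hnewton := newton s 0 (N - 2) (by omega)
        rw [mesymm_zero] at hnewton
        have hc : ((N - 2 : ℕ) : ℝ) = (N : ℝ) - 2 := by
          have : (2:ℕ) ≤ N := by omega
          push_cast [Nat.cast_sub this]; ring
        rw [hc] at hnewton
        have he1 : 0 < s.esymm 1 := hpos 1 (by omega)
        norm_num at hnewton ⊢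
        nlinarith [hnewton]
      · -- inductive step: k ≥ 1
        have hk : 1 ≤ k := by omega
        have ihk := ih hk (by omega)
        have hnewton := newton s k (N - k - 2) (by omega)
        have hc2 : ((N - k - 2 : ℕ) : ℝ) = (N : ℝ) - k - 2 := by
          have h2 : k + 2 ≤ N := by omega
          push_cast [Nat.cast_sub (by omega : 2 ≤ N - k), Nat.cast_sub (by omega : k ≤ N)]
          ring
        rw [hc2] at hnewton
        have hek : 0 < s.esymm k := hpos k (by omega)
        have hek1 : 0 < s.esymm (k + 1) := hpos (k + 1) (by omega)
        have hek2 : 0 < s.esymm (k + 2) := hpos (k + 2) (by omega)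
        have he1 : 0 < s.esymm 1 := hpos 1 (by omega)
        -- target : N * (k+2) * e_{k+2} ≤ (N - (k+1)) * (e1 * e_{k+1})
        have hcastgoal : ((k + 1 : ℕ) : ℝ) = (k : ℝ) + 1 := by push_cast; ring
        push_cast
        -- multiply target by (k+1) * e_{k+1} > 0
        have hpos2 : (0:ℝ) < ((k:ℝ) + 1) * s.esymm (k + 1) := by positivity
        rw [show ((k:ℝ) + 1 + 1) = (k:ℝ) + 2 by ring]
        refine le_of_mul_le_mul_right ?_ hpos2
        -- h1 : multiply ihk by (k+2) * e_{k+2} ≥ 0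
        have h1 := mul_le_mul_of_nonneg_left ihk
          (by positivity : (0:ℝ) ≤ ((k:ℝ) + 2) * s.esymm (k + 2))
        -- h3 : multiply newton by e1 ≥ 0
        have h3 := mul_le_mul_of_nonneg_left hnewton (le_of_lt he1)
        nlinarith [h1, h3]
  have hfin := claim (m - 1) (by omega) (by omega)
  have hmm : m - 1 + 1 = m := by omega
  rw [hmm] at hfin
  have hNc : ((N : ℝ) - ((m:ℕ) - 1 : ℕ)) = (m : ℝ) := by
    push_cast [Nat.cast_sub (by omega : 1 ≤ m), Nat.cast_sub (by omega : 1 ≤ 2*m)]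
    rw [hNdef]; push_cast [Nat.cast_sub (by omega : 1 ≤ 2*m)]
    ring
  rw [hNc] at hfin
  have hcast : ((m - 1 : ℕ) : ℝ) = (m : ℝ) - 1 := by
    push_cast [Nat.cast_sub (by omega : 1 ≤ m)]; ring
  rw [hcast] at hfin
  -- hfin : N * ((m-1) + 1) * e_m ≤ m * (e1 * e_{m-1})
  have hmpos : (0:ℝ) < (m:ℝ) := by
    have : 0 < m := by omega
    exact_mod_cast this
  have h2 : (m:ℝ) * (((N:ℕ) : ℝ) * s.esymm m) ≤ (m:ℝ) * (s.esymm 1 * s.esymm (m - 1)) := by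
    nlinarith [hfin]
  exact le_of_mul_le_mul_left h2 hmpos


end GV

/-- Guan–Viaclovsky in eigenvalue form: if `n = 2m` and the Schouten eigenvalues
`aᵢ = (λᵢ - σ₁(λ)/(2(n-1)))/(n-2)` lie in `Γ_m⁺`, then every `λᵢ > 0`. -/
theorem ricci_pos_of_cone {m : ℕ} (hm : 2 ≤ m) (n : ℕ) (hn : n = 2 * m)
    (lam a : Fin n → ℝ)
    (ha : ∀ i, a i = (1 / ((n : ℝ) - 2)) * (lam i - esymm 1 lam / (2 * ((n : ℝ) - 1))))
    (hcone : ∀ j, 1 ≤ j → j ≤ m → 0 < esymm j a) :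
    ∀ i, 0 < lam i := by
  have hn4 : 4 ≤ n := by omega
  have hn4' : (4:ℝ) ≤ (n:ℝ) := by exact_mod_cast hn4
  have hn2 : (0:ℝ) < (n:ℝ) - 2 := by linarith
  have hn1 : (0:ℝ) < (n:ℝ) - 1 := by linarith
  have esymm1 : ∀ x : Fin n → ℝ, esymm 1 x = ∑ i, x i := by
    intro x
    rw [show esymm 1 x = (Finset.univ.val.map x).esymm 1 from
      (Finset.esymm_map_val x Finset.univ 1).symm, GV.mesymm_one]
    rfl
  have hsum_a : esymm 1 a = esymm 1 lam / (2 * ((n:ℝ) - 1)) := by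
    rw [esymm1 a, Finset.sum_congr rfl (fun i _ => ha i), ← Finset.mul_sum,
      Finset.sum_sub_distrib, Finset.sum_const, Finset.card_univ, Fintype.card_fin,
      ← esymm1 lam]
    rw [nsmul_eq_mul]
    field_simp [hn1.ne', hn2.ne']
    ring
  have hlam : ∀ i, lam i = ((n:ℝ) - 2) * a i + esymm 1 a := by
    intro i
    rw [hsum_a, ha i]
    field_simp
    ring
  have hne : (Finset.univ : Finset (Fin n)).Nonempty := ⟨⟨0, by omega⟩, Finset.mem_univ _⟩
  obtain ⟨i₀, -, hmin⟩ := Finset.exists_min_image Finset.univ a hne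
  suffices h0 : 0 < lam i₀ by
    intro i
    have hmi := hmin i (Finset.mem_univ i)
    rw [hlam i]
    rw [hlam i₀] at h0
    nlinarith [hmi, hn2, h0]
  by_cases hsgn : 0 ≤ a i₀
  · rw [hlam i₀]
    have e1pos := hcone 1 le_rfl (by omega)
    nlinarith [e1pos, hn2, hsgn]
  · push_neg at hsgn
    set Mf : Multiset ℝ := Finset.univ.val.map a with hMf
    set M' : Multiset ℝ := (Finset.univ.val.erase i₀).map a with hM'
    have hmem : i₀ ∈ (Finset.univ : Finset (Fin n)).val := Finset.mem_def.mp (Finset.mem_univ i₀)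
    have hconsM : Mf = a i₀ ::ₘ M' := by
      rw [hMf, hM', ← Multiset.map_cons, Multiset.cons_erase hmem]
    have hcardM' : Multiset.card M' = 2 * m - 1 := by
      rw [hM', Multiset.card_map, Multiset.card_erase_of_mem hmem]
      have hcu : Multiset.card (Finset.univ : Finset (Fin n)).val = n := by
        rw [← Finset.card_def, Finset.card_univ, Fintype.card_fin]
      rw [hcu, Nat.pred_eq_sub_one]
      omega
    have hesymm_a : ∀ j, esymm j a = Mf.esymm j := fun j =>
      (Finset.esymm_map_val a Finset.univ j).symm
    have hrec : ∀ jj : ℕ, Mf.esymm (jj + 1) = M'.esymm (jj + 1) + a i₀ * M'.esymm jj := by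
      intro jj
      rw [hconsM]
      exact GV.mesymm_cons _ _ _
    have hpos' : ∀ j, j ≤ m → 0 < M'.esymm j := by
      intro j
      induction j with
      | zero => intro _; rw [GV.mesymm_zero]; norm_num
      | succ j ih =>
        intro hj
        have h1 : 0 < Mf.esymm (j + 1) := by
          rw [← hesymm_a]; exact hcone (j + 1) (by omega) hj
        have h2 := ih (by omega)
        have h3 := hrec j
        nlinarith [h1, h2, h3, hsgn]
    have hch := GV.chain M' m hm hcardM' hpos'
    have hN : ((2 * m - 1 : ℕ) : ℝ) = (n:ℝ) - 1 := by
      push_cast [Nat.cast_sub (by omega : 1 ≤ 2 * m)]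
      rw [hn]
      push_cast
      ring
    rw [hN] at hch
    have hEm : 0 < Mf.esymm m := by rw [← hesymm_a]; exact hcone m (by omega) le_rfl
    have hrecm := hrec (m - 1)
    rw [show m - 1 + 1 = m by omega] at hrecm
    have hEm' : 0 < M'.esymm m + a i₀ * M'.esymm (m - 1) := by rw [← hrecm]; exact hEm
    have h4 : 0 < M'.esymm (m - 1) := hpos' (m - 1) (by omega)
    have h5 : 0 < ((n:ℝ) - 1) * (M'.esymm m + a i₀ * M'.esymm (m - 1)) := mul_pos hn1 hEm'
    have hkey : 0 < ((n:ℝ) - 1) * a i₀ + M'.esymm 1 := by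
      nlinarith [h5, hch, h4]
    rw [hlam i₀]
    have he1a : esymm 1 a = M'.esymm 1 + a i₀ := by
      rw [hesymm_a 1, hrec 0, GV.mesymm_zero]
      ring
    rw [he1a]
    linarith [hkey]
end
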